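/- arXiv:1805.04175 — 2 statements merged into one kernel-verified Lean document; each statement's English description precedes it below -/
import Mathlib

section
/- Let T' be obtained from the rooted binary tree T by an NNI at the configuration (a, b, c, d, e, f), and let 𝒫 be a system of disjoint paths in T with top-set V and top-vector x. Then: (i) if b ∉ V and c ∉ V, then x is maintaining; (ii) if b ∈ V, then x is maintaining if and only if d is not blocked in V; (iii) if c ∈ V, then x is maintaining if and only if f is not blocked in V. -/
open Pointwise

/-- A rooted binary tree on the finite vertex type `V`, presented by its parent function:
the root is its own parent, every vertex reaches the root by iterating the parent map,
every vertex has either no children (a leaf) or exactly two children, and the root has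
exactly two children (so the root has degree 2, leaves have degree 1, and all other
vertices have degree 3). -/
structure RBT (V : Type) [Fintype V] [DecidableEq V] : Type where
  root : V
  parent : V → V
  parent_root : parent root = root
  reaches : ∀ v : V, ∃ k : ℕ, parent^[k] v = root
  binary : ∀ v : V,
    Nat.card {u : V // parent u = v ∧ u ≠ v} = 0 ∨
      Nat.card {u : V // parent u = v ∧ u ≠ v} = 2
  root_binary : Nat.card {u : V // parent u = root ∧ u ≠ root} = 2

namespace RBT

variable {V : Type} [Fintype V] [DecidableEq V] (T : RBT V)

/-- `u` is a child of `v` in `T`. -/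
def isChild (u v : V) : Prop := T.parent u = v ∧ u ≠ v

/-- A leaf of `T` is a vertex with no children. -/
def isLeaf (v : V) : Prop := ∀ u : V, T.parent u = v → u = v

/-- An internal vertex of `T` is a vertex which is not a leaf. -/
def isInternal (v : V) : Prop := ¬ T.isLeaf v

instance : DecidablePred T.isLeaf := fun v =>
  decidable_of_iff (∀ u : V, T.parent u = v → u = v) Iff.rfl

instance : DecidablePred T.isInternal := fun v =>
  inferInstanceAs (Decidable (¬ T.isLeaf v))

/-- `u` is a (weak) descendant of `v`, i.e. `v` lies on the path from `u` to the root. -/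
def desc (u v : V) : Prop := ∃ k : ℕ, T.parent^[k] u = v

/-- `u` is a strict descendant of `v`. -/
def strictDesc (u v : V) : Prop := T.desc u v ∧ u ≠ v

/-- `u` and `v` are adjacent vertices of `T`. -/
def adjacent (u v : V) : Prop := T.isChild u v ∨ T.isChild v u

instance : DecidableRel T.isChild := fun u v =>
  decidable_of_iff (T.parent u = v ∧ u ≠ v) Iff.rfl

instance : DecidableRel T.adjacent := fun u v =>
  inferInstanceAs (Decidable (T.isChild u v ∨ T.isChild v u))

/-- The set of edges (each edge being labelled by its endpoint farther from the root)
on the path from `l` up to the root. -/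
def upEdges (l : V) : Set V := {u : V | u ≠ T.root ∧ T.desc l u}

/-- The edge set of the unique path in `T` joining the two members of an unordered
pair of vertices (edges are labelled by their endpoint farther from the root). -/
def pathEdges : Sym2 V → Set V :=
  Sym2.lift ⟨fun l₁ l₂ => symmDiff (T.upEdges l₁) (T.upEdges l₂), fun _ _ => symmDiff_comm _ _⟩

/-- `v` is the lowest common ancestor of `l₁` and `l₂`: it is an ancestor of both, and it
descends from every common ancestor.  Equivalently, `v` is the unique vertex of the path
from `l₁` to `l₂` which is an ancestor of every vertex of that path. -/
def isLCA (l₁ l₂ v : V) : Prop :=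
  T.desc l₁ v ∧ T.desc l₂ v ∧ ∀ w : V, T.desc l₁ w → T.desc l₂ w → T.desc v w

/-- `v` is the top vertex of the path joining the two members of the unordered pair `p`. -/
def isTopOf (v : V) : Sym2 V → Prop :=
  Sym2.lift ⟨fun l₁ l₂ => T.isLCA l₁ l₂ v, fun a b => by
    simp only [eq_iff_iff, isLCA]
    constructor <;> rintro ⟨h₁, h₂, h₃⟩ <;> exact ⟨h₂, h₁, fun w hw₁ hw₂ => h₃ w hw₂ hw₁⟩⟩

end RBT

/-- A system of disjoint paths in `T`: a finite set of unordered pairs of distinct leaves,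
such that the unique paths in `T` joining the pairs are pairwise edge-disjoint. -/
structure PathSystem {V : Type} [Fintype V] [DecidableEq V] (T : RBT V) : Type where
  pairs : Finset (Sym2 V)
  leaf_mem : ∀ p ∈ pairs, ∀ l ∈ p, T.isLeaf l
  not_diag : ∀ p ∈ pairs, ¬ p.IsDiag
  edge_disjoint : (pairs : Set (Sym2 V)).Pairwise fun p q =>
    Disjoint (T.pathEdges p) (T.pathEdges q)

namespace PathSystem

variable {V : Type} [Fintype V] [DecidableEq V] {T : RBT V}

/-- The top-set of a system of disjoint paths: the set of top vertices of its paths. -/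
def topSet (P : PathSystem T) : Set V := {v : V | ∃ p ∈ P.pairs, T.isTopOf v p}

/-- The top-vector of a system of disjoint paths, as a point of `ℝ^{Int(T)}`:
the 0/1 indicator vector of its top-set. -/
noncomputable def topVector (P : PathSystem T) : {v : V // T.isInternal v} → ℝ := fun v =>
  Set.indicator P.topSet (fun _ => (1 : ℝ)) (v : V)

end PathSystem

namespace RBT

variable {V : Type} [Fintype V] [DecidableEq V] (T : RBT V)

/-- The set of top-vectors of all systems of disjoint paths in `T`. -/
noncomputable def topVectors : Set ({v : V // T.isInternal v} → ℝ) :=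
  Set.range fun P : PathSystem T => P.topVector

/-- The CFN-MC polytope `R_T ⊆ ℝ^{Int(T)}`: the convex hull of the top-vectors of all
systems of disjoint paths in `T`. -/
noncomputable def cfnmcPolytope : Set ({v : V // T.isInternal v} → ℝ) :=
  convexHull ℝ T.topVectors

end RBT

namespace PathSystem

variable {V : Type} [Fintype V] [DecidableEq V] {T : RBT V}

/-- The top-vector of a system of disjoint paths, recorded as a vector indexed by all
vertices of `T` (its support lies in `Int(T)`, since top vertices are internal; this is
the canonical copy of the top-vector under `ℝ^{Int(T)} ↪ ℝ^V`). -/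
noncomputable def topVec (P : PathSystem T) : V → ℝ :=
  Set.indicator P.topSet fun _ => (1 : ℝ)

end PathSystem

namespace RBT

variable {V : Type} [Fintype V] [DecidableEq V] (T : RBT V)

/-- The CFN-MC polytope `R_T`, realized inside `ℝ^V` via the canonical embedding
`ℝ^{Int(T)} ↪ ℝ^V` (all coordinates outside `Int(T)` vanish on `R_T`). -/
noncomputable def cfnmcPolytopeFull : Set (V → ℝ) :=
  convexHull ℝ (Set.range fun P : PathSystem T => P.topVec)

/-- The vertex `x` is blocked in the vertex set `S`: every path in `T` from `x` down to a
leaf descended from `x` contains some vertex of `S`. -/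
def blocked (x : V) (S : Set V) : Prop :=
  ∀ l : V, T.isLeaf l → T.desc l x → ∃ w ∈ S, T.desc l w ∧ T.desc w x

end RBT

/-- `x` is the top-vector (in `ℝ^V`) of some system of disjoint paths in `T`. -/
def IsTopVecOf {V : Type} [Fintype V] [DecidableEq V] (T : RBT V) (x : V → ℝ) : Prop :=
  ∃ P : PathSystem T, P.topVec = x

/-- A nearest neighbor interchange (NNI) from `T` to `T'` at the configuration
`(a, b, c, d, e, f)`: in `T`, `b` is a child of `a`, the children of `b` are `c` and `f`
with `c` internal, and the children of `c` are `d` and `e`.  The tree `T'` has the same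
vertex set, the same root and the same leaves: in `T'` the children of `b` are `d` and
`c`, the children of `c` are `e` and `f`, and all other parent–child relations are as in
`T` (so `Int(T') = Int(T)`). -/
structure NNIConfig {V : Type} [Fintype V] [DecidableEq V] (T T' : RBT V) : Type where
  a : V
  b : V
  c : V
  d : V
  e : V
  f : V
  child_b : T.isChild b a
  child_c : T.isChild c b
  child_f : T.isChild f b
  fc_ne : f ≠ c
  child_d : T.isChild d c
  child_e : T.isChild e c
  de_ne : d ≠ e
  root_eq : T'.root = T.root
  child_d' : T'.isChild d b
  child_f' : T'.isChild f c
  parent_eq : ∀ v : V, v ≠ d → v ≠ f → T'.parent v = T.parent v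


/-! ### Auxiliary lemmas: basic facts about rooted binary trees -/

namespace RBT

variable {V : Type} [Fintype V] [DecidableEq V] {T : RBT V}

lemma desc_refl' (T : RBT V) (u : V) : T.desc u u := ⟨0, rfl⟩

lemma desc_trans' {u v w : V} (h1 : T.desc u v) (h2 : T.desc v w) : T.desc u w := by
  obtain ⟨i, hi⟩ := h1; obtain ⟨j, hj⟩ := h2
  exact ⟨j + i, by rw [Function.iterate_add_apply, hi, hj]⟩

lemma desc_parent' (T : RBT V) (u : V) : T.desc u (T.parent u) := ⟨1, rfl⟩

lemma iterate_parent_root (T : RBT V) (k : ℕ) : T.parent^[k] T.root = T.root := by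
  induction k with
  | zero => rfl
  | succ n ih => rw [Function.iterate_succ_apply', ih, T.parent_root]

lemma desc_root' (T : RBT V) (u : V) : T.desc u T.root := T.reaches u

lemma desc_antisymm' {u v : V} (h1 : T.desc u v) (h2 : T.desc v u) : u = v := by
  obtain ⟨i, hi⟩ := h1; obtain ⟨j, hj⟩ := h2
  rcases Nat.eq_zero_or_pos i with hz | hpos
  · subst hz; exact hi
  · have hmul : ∀ m : ℕ, T.parent^[(j + i) * m] u = u := by
      intro m
      induction m with
      | zero => rfl
      | succ n ih =>
        rw [Nat.mul_succ, Function.iterate_add_apply, Function.iterate_add_apply, hi, hj, ih]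
    obtain ⟨m, hm⟩ := T.reaches u
    have hle : m ≤ (j + i) * (m + 1) := by
      calc m ≤ m + 1 := Nat.le_succ m
        _ ≤ (j + i) * (m + 1) := Nat.le_mul_of_pos_left _ (by omega)
    have hroot : T.parent^[(j + i) * (m + 1)] u = T.root := by
      have hsplit : (j + i) * (m + 1) = ((j + i) * (m + 1) - m) + m := by omega
      rw [hsplit, Function.iterate_add_apply, hm, iterate_parent_root]
    have hu : u = T.root := by rw [← hmul (m + 1), hroot]
    subst hu
    rw [iterate_parent_root] at hi
    exact hi.symm ▸ rfl

lemma desc_comp {l u v : V} (h1 : T.desc l u) (h2 : T.desc l v) : T.desc u v ∨ T.desc v u := by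
  obtain ⟨i, hi⟩ := h1; obtain ⟨j, hj⟩ := h2
  rcases le_total i j with h | h
  · left
    exact ⟨j - i, by rw [← hi, ← Function.iterate_add_apply, (by omega : j - i + i = j), hj]⟩
  · right
    exact ⟨i - j, by rw [← hj, ← Function.iterate_add_apply, (by omega : i - j + j = i), hi]⟩

lemma isChild.desc {u v : V} (h : T.isChild u v) : T.desc u v := h.1 ▸ T.desc_parent' u

lemma child_ne_root {u v : V} (h : T.isChild u v) : u ≠ T.root := by
  intro e
  exact h.2 (by rw [← h.1, e, T.parent_root])

lemma desc_child_cases {u v : V} (h : T.desc u v) (hne : u ≠ v) :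
    ∃ w, T.isChild w v ∧ T.desc u w := by
  have hex : ∃ k, T.parent^[k] u = v := h
  have hk : T.parent^[Nat.find hex] u = v := Nat.find_spec hex
  have hk0 : Nat.find hex ≠ 0 := by
    intro e; apply hne; rw [← hk, e]; rfl
  refine ⟨T.parent^[Nat.find hex - 1] u, ⟨?_, ?_⟩, ⟨Nat.find hex - 1, rfl⟩⟩
  · have h1 : T.parent^[Nat.find hex - 1 + 1] u = v := by
      rw [(by omega : Nat.find hex - 1 + 1 = Nat.find hex)]; exact hk
    rw [Function.iterate_succ_apply'] at h1
    exact h1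
  · intro e
    exact Nat.find_min hex (by omega : Nat.find hex - 1 < Nat.find hex) e

lemma desc_of_child_desc {x v y : V} (hx : T.isChild x v) (h : T.desc x y) (hne : x ≠ y) :
    T.desc v y := by
  obtain ⟨k, hk⟩ := h
  have hk0 : k ≠ 0 := by intro e; apply hne; rw [← hk, e]; rfl
  refine ⟨k - 1, ?_⟩
  rw [← hx.1]
  have h1 : T.parent^[k - 1] (T.parent x) = T.parent^[k - 1 + 1] x :=
    (Function.iterate_succ_apply _ _ _).symm
  rw [h1, (by omega : k - 1 + 1 = k)]
  exact hk

lemma child_eq_or {v x y u : V} (hx : T.isChild x v) (hy : T.isChild y v) (hxy : x ≠ y)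
    (hu : T.isChild u v) : u = x ∨ u = y := by
  by_contra hcon
  push_neg at hcon
  have h2 : Nat.card {w : V // T.parent w = v ∧ w ≠ v} = 2 := by
    rcases T.binary v with h | h
    · exfalso
      rw [Nat.card_eq_fintype_card, Fintype.card_eq_zero_iff] at h
      exact h.elim' ⟨x, hx.1, hx.2⟩
    · exact h
  rw [Nat.card_eq_fintype_card] at h2
  have hcard : ({⟨x, hx.1, hx.2⟩, ⟨y, hy.1, hy.2⟩, ⟨u, hu.1, hu.2⟩} :
      Finset {w : V // T.parent w = v ∧ w ≠ v}).card = 3 := by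
    rw [Finset.card_insert_of_notMem, Finset.card_insert_of_notMem, Finset.card_singleton]
    · simp only [Finset.mem_singleton, Subtype.mk.injEq]
      exact fun h => hcon.2 h.symm
    · simp only [Finset.mem_insert, Finset.mem_singleton, Subtype.mk.injEq]
      push_neg
      exact ⟨hxy, fun h => hcon.1 h.symm⟩
  have hle := Finset.card_le_univ ({⟨x, hx.1, hx.2⟩, ⟨y, hy.1, hy.2⟩, ⟨u, hu.1, hu.2⟩} :
      Finset {w : V // T.parent w = v ∧ w ≠ v})
  rw [h2, hcard] at hle
  omega

lemma siblings_disjoint {v x y u : V} (hx : T.isChild x v) (hy : T.isChild y v) (hxy : x ≠ y)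
    (hux : T.desc u x) (huy : T.desc u y) : False := by
  rcases desc_comp hux huy with h | h
  · exact hy.2 (desc_antisymm' hy.desc (desc_of_child_desc hx h hxy))
  · exact hx.2 (desc_antisymm' hx.desc (desc_of_child_desc hy h hxy.symm))

lemma desc_cases_two {v c1 c2 u : V} (h1 : T.isChild c1 v) (h2 : T.isChild c2 v)
    (hpair : ∀ w, T.isChild w v → w = c1 ∨ w = c2) (h : T.desc u v) :
    u = v ∨ T.desc u c1 ∨ T.desc u c2 := by
  by_cases he : u = v
  · exact Or.inl he
  · obtain ⟨w, hw, huw⟩ := desc_child_cases h he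
    rcases hpair w hw with rfl | rfl
    · exact Or.inr (Or.inl huw)
    · exact Or.inr (Or.inr huw)

lemma lca_exists (T : RBT V) (l1 l2 : V) : ∃ v, T.isLCA l1 l2 v := by
  classical
  have hex : ∃ k, T.desc l2 (T.parent^[k] l1) := by
    obtain ⟨m, hm⟩ := T.reaches l1
    exact ⟨m, hm ▸ T.desc_root' l2⟩
  refine ⟨T.parent^[Nat.find hex] l1, ⟨Nat.find hex, rfl⟩, Nat.find_spec hex, ?_⟩
  rintro w ⟨i, hi⟩ h2
  rcases le_or_gt (Nat.find hex) i with h | h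
  · exact ⟨i - Nat.find hex, by
      rw [← Function.iterate_add_apply, (by omega : i - Nat.find hex + Nat.find hex = i), hi]⟩
  · exact absurd (hi ▸ h2) (Nat.find_min hex h)

lemma isLCA_unique {l1 l2 v w : V} (h1 : T.isLCA l1 l2 v) (h2 : T.isLCA l1 l2 w) : v = w :=
  desc_antisymm' (h1.2.2 w h2.1 h2.2.1) (h2.2.2 v h1.1 h1.2.1)

lemma lca_of_split {v c1 c2 l1 l2 : V} (h1 : T.isChild c1 v) (h2 : T.isChild c2 v)
    (h12 : c1 ≠ c2) (hpair : ∀ w, T.isChild w v → w = c1 ∨ w = c2)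
    (hl1 : T.desc l1 c1) (hl2 : T.desc l2 c2) : T.isLCA l1 l2 v := by
  refine ⟨desc_trans' hl1 h1.desc, desc_trans' hl2 h2.desc, ?_⟩
  intro w hw1 hw2
  rcases desc_comp hw1 (desc_trans' hl1 h1.desc) with h | h
  · rcases desc_cases_two h1 h2 hpair h with rfl | h | h
    · exact T.desc_refl' w
    · exact absurd hl2 (fun hl2' => siblings_disjoint h1 h2 h12 (desc_trans' hw2 h) hl2')
    · exact absurd hl1 (fun hl1' => siblings_disjoint h1 h2 h12 hl1' (desc_trans' hw1 h))
  · exact h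

lemma mem_pathEdges {l1 l2 α : V} :
    α ∈ T.pathEdges s(l1, l2) ↔ α ≠ T.root ∧ ¬(T.desc l1 α ↔ T.desc l2 α) := by
  have : T.pathEdges s(l1, l2) = symmDiff (T.upEdges l1) (T.upEdges l2) := rfl
  rw [this, Set.mem_symmDiff]
  simp only [upEdges, Set.mem_setOf_eq]
  tauto

lemma isTopOf_mk {l1 l2 v : V} : T.isTopOf v s(l1, l2) ↔ T.isLCA l1 l2 v := Iff.rfl

lemma leaf_desc_eq {l u : V} (hl : T.isLeaf l) (h : T.desc u l) : u = l := by
  by_contra hne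
  obtain ⟨w, hw, -⟩ := desc_child_cases h hne
  exact hw.2 (hl w hw.1)

lemma isTopOf_unique {p : Sym2 V} {v w : V} (h1 : T.isTopOf v p) (h2 : T.isTopOf w p) :
    v = w := by
  induction p using Sym2.inductionOn with
  | hf x y => exact isLCA_unique h1 h2

end RBT

namespace PathSystem

open RBT

variable {V : Type} [Fintype V] [DecidableEq V] {T : RBT V} (P : PathSystem T)

lemma child_edge_of_top {q : Sym2 V} (hq : q ∈ P.pairs) {t u : V}
    (ht : T.isTopOf t q) (hu : T.isChild u t) : u ∈ T.pathEdges q := by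
  induction q using Sym2.inductionOn with
  | hf b1 b2 =>
    have hb1 : T.isLeaf b1 := P.leaf_mem _ hq b1 (Sym2.mem_mk_left _ _)
    have hb2 : T.isLeaf b2 := P.leaf_mem _ hq b2 (Sym2.mem_mk_right _ _)
    have hdiag : b1 ≠ b2 := by
      intro h; exact P.not_diag _ hq (h ▸ Sym2.mk_isDiag_iff.mpr rfl)
    rw [isTopOf_mk] at ht
    have hb1t : b1 ≠ t := by
      rintro rfl
      exact hdiag (leaf_desc_eq hb1 ht.2.1).symm
    have hb2t : b2 ≠ t := by
      rintro rfl
      exact hdiag (leaf_desc_eq hb2 ht.1)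
    obtain ⟨w1, hw1, hd1⟩ := desc_child_cases ht.1 hb1t
    obtain ⟨w2, hw2, hd2⟩ := desc_child_cases ht.2.1 hb2t
    have hw12 : w1 ≠ w2 := by
      rintro rfl
      exact hw1.2 (desc_antisymm' hw1.desc (ht.2.2 w1 hd1 hd2))
    rw [mem_pathEdges]
    refine ⟨child_ne_root hu, ?_⟩
    rcases child_eq_or hw1 hw2 hw12 hu with rfl | rfl
    · have : ¬ T.desc b2 u := fun h =>
        hw1.2 (desc_antisymm' hw1.desc (ht.2.2 u hd1 h))
      tauto
    · have : ¬ T.desc b1 u := fun h =>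
        hw2.2 (desc_antisymm' hw2.desc (ht.2.2 u h hd2))
      tauto

lemma top_unique_pair {p q : Sym2 V} {v : V} (hp : p ∈ P.pairs) (hq : q ∈ P.pairs)
    (htp : T.isTopOf v p) (htq : T.isTopOf v q) : p = q := by
  by_contra hne
  induction p using Sym2.inductionOn with
  | hf a1 a2 =>
    rw [isTopOf_mk] at htp
    have hb1 : T.isLeaf a1 := P.leaf_mem _ hp a1 (Sym2.mem_mk_left _ _)
    have hdiag : a1 ≠ a2 := by
      intro h; exact P.not_diag _ hp (h ▸ Sym2.mk_isDiag_iff.mpr rfl)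
    have ha1v : a1 ≠ v := by
      rintro rfl
      exact hdiag (leaf_desc_eq hb1 htp.2.1).symm
    obtain ⟨w1, hw1, hd1⟩ := desc_child_cases htp.1 ha1v
    have h1 : w1 ∈ T.pathEdges s(a1, a2) := P.child_edge_of_top hp (isTopOf_mk.mpr htp) hw1
    have h2 : w1 ∈ T.pathEdges q := P.child_edge_of_top hq htq hw1
    exact Set.disjoint_left.mp (P.edge_disjoint hp hq hne) h1 h2

lemma no_top_between {z : V} {p : Sym2 V} (hp : p ∈ P.pairs) (hzp : z ∈ p) {v : V}
    (htop : T.isTopOf v p) {t : V} (ht : t ∈ P.topSet)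
    (hzt : T.desc z t) (htv : T.desc t v) (hne : t ≠ v) : False := by
  obtain ⟨q, hq, htq⟩ := ht
  by_cases hz : t = z
  · subst hz
    have hleaf : T.isLeaf t := P.leaf_mem p hp t hzp
    induction q using Sym2.inductionOn with
    | hf b1 b2 =>
      rw [isTopOf_mk] at htq
      have h1 := leaf_desc_eq hleaf htq.1
      have h2 := leaf_desc_eq hleaf htq.2.1
      exact P.not_diag _ hq (by rw [h1, h2]; exact Sym2.mk_isDiag_iff.mpr rfl)
  · obtain ⟨u', hu', hzu'⟩ := desc_child_cases hzt (fun h => hz h.symm)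
    have hpq : p ≠ q := by
      rintro rfl
      exact hne (isTopOf_unique htq htop)
    have hedge_q : u' ∈ T.pathEdges q := P.child_edge_of_top hq htq hu'
    have hedge_p : u' ∈ T.pathEdges p := by
      obtain ⟨z2, rfl⟩ : ∃ z2, p = s(z, z2) := by
        induction p using Sym2.inductionOn with
        | hf x y =>
          rcases Sym2.mem_iff.mp hzp with rfl | rfl
          · exact ⟨y, rfl⟩
          · exact ⟨x, Sym2.eq_swap⟩
      rw [isTopOf_mk] at htop
      rw [mem_pathEdges]
      refine ⟨child_ne_root hu', ?_⟩
      have hnz2 : ¬ T.desc z2 u' := by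
        intro h
        have := htop.2.2 u' hzu' h
        exact hne (desc_antisymm' htv (desc_trans' this hu'.desc))
      tauto
    exact Set.disjoint_left.mp (P.edge_disjoint hp hq hpq) hedge_p hedge_q

lemma top_exists (p : Sym2 V) : ∃ v, T.isTopOf v p := by
  induction p using Sym2.inductionOn with
  | hf x y => exact T.lca_exists x y

end PathSystem


/-! ### Auxiliary lemmas: transfer between `T` and `T'` along an NNI -/

namespace NNIConfig

open RBT

variable {V : Type} [Fintype V] [DecidableEq V] {T T' : RBT V} (cfg : NNIConfig T T')

lemma c_ne_b : cfg.c ≠ cfg.b := cfg.child_c.2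
lemma f_ne_b : cfg.f ≠ cfg.b := cfg.child_f.2
lemma d_ne_c : cfg.d ≠ cfg.c := cfg.child_d.2
lemma e_ne_c : cfg.e ≠ cfg.c := cfg.child_e.2
lemma b_ne_a : cfg.b ≠ cfg.a := cfg.child_b.2

lemma e_ne_f : cfg.e ≠ cfg.f := by
  intro h
  apply cfg.c_ne_b
  rw [← cfg.child_e.1, h, cfg.child_f.1]

lemma d_ne_f : cfg.d ≠ cfg.f := by
  intro h
  apply cfg.c_ne_b
  rw [← cfg.child_d.1, h, cfg.child_f.1]

lemma b_ne_d : cfg.b ≠ cfg.d := by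
  intro h
  exact cfg.c_ne_b (desc_antisymm' cfg.child_c.desc (h ▸ cfg.child_d.desc))

lemma b_ne_e : cfg.b ≠ cfg.e := by
  intro h
  exact cfg.c_ne_b (desc_antisymm' cfg.child_c.desc (h ▸ cfg.child_e.desc))

lemma parent'_c : T'.parent cfg.c = cfg.b := by
  rw [cfg.parent_eq cfg.c (Ne.symm cfg.d_ne_c) (Ne.symm cfg.fc_ne), cfg.child_c.1]

lemma parent'_e : T'.parent cfg.e = cfg.c := by
  rw [cfg.parent_eq cfg.e (Ne.symm cfg.de_ne) cfg.e_ne_f, cfg.child_e.1]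

lemma parent'_b : T'.parent cfg.b = cfg.a := by
  rw [cfg.parent_eq cfg.b cfg.b_ne_d (Ne.symm cfg.f_ne_b), cfg.child_b.1]

lemma child'_c : T'.isChild cfg.c cfg.b := ⟨cfg.parent'_c, cfg.c_ne_b⟩
lemma child'_e : T'.isChild cfg.e cfg.c := ⟨cfg.parent'_e, cfg.e_ne_c⟩
lemma child'_b : T'.isChild cfg.b cfg.a := ⟨cfg.parent'_b, cfg.b_ne_a⟩

lemma hTc : ∀ u, T.isChild u cfg.c → u = cfg.d ∨ u = cfg.e :=
  fun _ hu => child_eq_or cfg.child_d cfg.child_e cfg.de_ne hu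

lemma hTb : ∀ u, T.isChild u cfg.b → u = cfg.c ∨ u = cfg.f :=
  fun _ hu => child_eq_or cfg.child_c cfg.child_f (Ne.symm cfg.fc_ne) hu

lemma hT'b : ∀ u, T'.isChild u cfg.b → u = cfg.d ∨ u = cfg.c :=
  fun _ hu => child_eq_or cfg.child_d' cfg.child'_c (Ne.symm (fun h => cfg.d_ne_c h.symm)) hu

lemma hT'c : ∀ u, T'.isChild u cfg.c → u = cfg.e ∨ u = cfg.f :=
  fun _ hu => child_eq_or cfg.child'_e cfg.child_f' cfg.e_ne_f hu

/-- The reverse NNI configuration, from `T'` back to `T`. -/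
def symm (cfg : NNIConfig T T') : NNIConfig T' T where
  a := cfg.a
  b := cfg.b
  c := cfg.c
  d := cfg.f
  e := cfg.e
  f := cfg.d
  child_b := cfg.child'_b
  child_c := cfg.child'_c
  child_f := cfg.child_d'
  fc_ne := cfg.d_ne_c
  child_d := cfg.child_f'
  child_e := cfg.child'_e
  de_ne := Ne.symm cfg.e_ne_f
  root_eq := cfg.root_eq.symm
  child_d' := cfg.child_f
  child_f' := cfg.child_d
  parent_eq := fun v hvf hvd => (cfg.parent_eq v hvd hvf).symm

@[simp] lemma symm_a : cfg.symm.a = cfg.a := rfl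
@[simp] lemma symm_b : cfg.symm.b = cfg.b := rfl
@[simp] lemma symm_c : cfg.symm.c = cfg.c := rfl
@[simp] lemma symm_d : cfg.symm.d = cfg.f := rfl
@[simp] lemma symm_e : cfg.symm.e = cfg.e := rfl
@[simp] lemma symm_f : cfg.symm.f = cfg.d := rfl

lemma desc_fwd {u v : V} (h : T.desc u v) :
    T'.desc u v ∨ (v = cfg.c ∧ T'.desc u cfg.b) := by
  obtain ⟨k, hk⟩ := h
  induction k generalizing v with
  | zero => exact Or.inl (hk ▸ T'.desc_refl' u)
  | succ n ih =>
    rw [Function.iterate_succ_apply'] at hk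
    rcases ih rfl with h | ⟨hc, hb⟩
    · by_cases hd : T.parent^[n] u = cfg.d
      · right
        refine ⟨by rw [← hk, hd, cfg.child_d.1], ?_⟩
        exact desc_trans' (hd ▸ h) cfg.child_d'.desc
      · by_cases hf : T.parent^[n] u = cfg.f
        · left
          have : v = cfg.b := by rw [← hk, hf, cfg.child_f.1]
          rw [this]
          exact desc_trans' (desc_trans' (hf ▸ h) cfg.child_f'.desc) cfg.child'_c.desc
        · left
          have : T'.parent (T.parent^[n] u) = v := by
            rw [cfg.parent_eq _ hd hf, hk]
          exact desc_trans' h (this ▸ T'.desc_parent' _)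
    · left
      have : v = cfg.b := by rw [← hk, hc, cfg.child_c.1]
      rw [this]
      exact hb

lemma desc_iff {u v : V} (hv : v ≠ cfg.c) : T'.desc u v ↔ T.desc u v := by
  constructor
  · intro h
    rcases cfg.symm.desc_fwd h with h' | ⟨hc, _⟩
    · exact h'
    · exact absurd hc hv
  · intro h
    rcases cfg.desc_fwd h with h' | ⟨hc, _⟩
    · exact h'
    · exact absurd hc hv

lemma desc'_c_iff {u : V} :
    T'.desc u cfg.c ↔ (u = cfg.c ∨ T.desc u cfg.e ∨ T.desc u cfg.f) := by
  constructor
  · intro h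
    rcases desc_cases_two cfg.child'_e cfg.child_f' cfg.hT'c h with h | h | h
    · exact Or.inl h
    · exact Or.inr (Or.inl ((cfg.desc_iff cfg.e_ne_c).mp h))
    · exact Or.inr (Or.inr ((cfg.desc_iff cfg.fc_ne).mp h))
  · rintro (rfl | h | h)
    · exact T'.desc_refl' _
    · exact desc_trans' ((cfg.desc_iff cfg.e_ne_c).mpr h) cfg.child'_e.desc
    · exact desc_trans' ((cfg.desc_iff cfg.fc_ne).mpr h) cfg.child_f'.desc

lemma desc_c_cases {u : V} (h : T.desc u cfg.c) :
    u = cfg.c ∨ T.desc u cfg.d ∨ T.desc u cfg.e :=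
  desc_cases_two cfg.child_d cfg.child_e cfg.hTc h

lemma desc_b_cases {u : V} (h : T.desc u cfg.b) :
    u = cfg.b ∨ T.desc u cfg.c ∨ T.desc u cfg.f :=
  desc_cases_two cfg.child_c cfg.child_f cfg.hTb h

lemma disjDE {u : V} (h1 : T.desc u cfg.d) (h2 : T.desc u cfg.e) : False :=
  siblings_disjoint cfg.child_d cfg.child_e cfg.de_ne h1 h2

lemma disjCF {u : V} (h1 : T.desc u cfg.c) (h2 : T.desc u cfg.f) : False :=
  siblings_disjoint cfg.child_c cfg.child_f (Ne.symm cfg.fc_ne) h1 h2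

lemma disjDF {u : V} (h1 : T.desc u cfg.d) (h2 : T.desc u cfg.f) : False :=
  cfg.disjCF (desc_trans' h1 cfg.child_d.desc) h2

lemma disjEF {u : V} (h1 : T.desc u cfg.e) (h2 : T.desc u cfg.f) : False :=
  cfg.disjCF (desc_trans' h1 cfg.child_e.desc) h2

lemma leaf_ne_b {l : V} (hl : T.isLeaf l) : l ≠ cfg.b := by
  rintro rfl
  exact cfg.child_c.2 (hl cfg.c cfg.child_c.1)

lemma leaf_ne_c {l : V} (hl : T.isLeaf l) : l ≠ cfg.c := by
  rintro rfl
  exact cfg.child_d.2 (hl cfg.d cfg.child_d.1)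

include cfg in
lemma leaf_iff {v : V} : T'.isLeaf v ↔ T.isLeaf v := by
  by_cases hb : v = cfg.b
  · subst hb
    constructor
    · intro h; exact absurd (h cfg.d cfg.child_d'.1) cfg.child_d'.2
    · intro h; exact absurd (h cfg.c cfg.child_c.1) cfg.child_c.2
  · by_cases hc : v = cfg.c
    · subst hc
      constructor
      · intro h; exact absurd (h cfg.f cfg.child_f'.1) cfg.child_f'.2
      · intro h; exact absurd (h cfg.d cfg.child_d.1) cfg.child_d.2
    · constructor
      · intro h u hu
        by_cases hd : u = cfg.d
        · exact absurd (by rw [← hu, hd, cfg.child_d.1] : v = cfg.c) hc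
        · by_cases hf : u = cfg.f
          · exact absurd (by rw [← hu, hf, cfg.child_f.1] : v = cfg.b) hb
          · exact h u (by rw [cfg.parent_eq u hd hf]; exact hu)
      · intro h u hu
        by_cases hd : u = cfg.d
        · exact absurd (by rw [← hu, hd, cfg.child_d'.1] : v = cfg.b) hb
        · by_cases hf : u = cfg.f
          · exact absurd (by rw [← hu, hf, cfg.child_f'.1] : v = cfg.c) hc
          · exact h u (by rw [← cfg.parent_eq u hd hf]; exact hu)

lemma b_ne_root : cfg.b ≠ T.root := child_ne_root cfg.child_b
lemma c_ne_root : cfg.c ≠ T.root := child_ne_root cfg.child_c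
lemma c_ne_root' : cfg.c ≠ T'.root := cfg.root_eq ▸ cfg.c_ne_root

end NNIConfig


namespace PathSystem

open RBT

variable {V : Type} [Fintype V] [DecidableEq V] {T : RBT V} (P : PathSystem T)

lemma top_pair_split {p : Sym2 V} (hp : p ∈ P.pairs) {v c1 c2 : V}
    (h1 : T.isChild c1 v) (h2 : T.isChild c2 v) (h12 : c1 ≠ c2)
    (hpair : ∀ w, T.isChild w v → w = c1 ∨ w = c2) (htop : T.isTopOf v p) :
    ∃ x y, p = s(x, y) ∧ T.isLeaf x ∧ T.isLeaf y ∧ T.desc x c1 ∧ T.desc y c2 := by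
  induction p using Sym2.inductionOn with
  | hf l1 l2 =>
    have hl1 : T.isLeaf l1 := P.leaf_mem _ hp l1 (Sym2.mem_mk_left _ _)
    have hl2 : T.isLeaf l2 := P.leaf_mem _ hp l2 (Sym2.mem_mk_right _ _)
    rw [isTopOf_mk] at htop
    have hv1 : l1 ≠ v := by
      rintro rfl
      exact h1.2 (hl1 c1 h1.1)
    have hv2 : l2 ≠ v := by
      rintro rfl
      exact h1.2 (hl2 c1 h1.1)
    have k1 := desc_cases_two h1 h2 hpair htop.1
    have k2 := desc_cases_two h1 h2 hpair htop.2.1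
    rcases k1 with h | k1 | k1
    · exact absurd h hv1
    · rcases k2 with h | k2 | k2
      · exact absurd h hv2
      · exact absurd (desc_antisymm' (htop.2.2 c1 k1 k2) h1.desc).symm h1.2
      · exact ⟨l1, l2, rfl, hl1, hl2, k1, k2⟩
    · rcases k2 with h | k2 | k2
      · exact absurd h hv2
      · exact ⟨l2, l1, Sym2.eq_swap, hl2, hl1, k2, k1⟩
      · exact absurd (desc_antisymm' (htop.2.2 c2 k1 k2) h2.desc).symm h2.2

end PathSystem

lemma topVec_eq_of_topSet_eq {V : Type} [Fintype V] [DecidableEq V] {T T' : RBT V}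
    {Q : PathSystem T'} {P : PathSystem T} (h : Q.topSet = P.topSet) :
    Q.topVec = P.topVec := by
  unfold PathSystem.topVec
  rw [h]

lemma topSet_eq_of_topVec_eq {V : Type} [Fintype V] [DecidableEq V] {T T' : RBT V}
    {Q : PathSystem T'} {P : PathSystem T} (h : Q.topVec = P.topVec) :
    Q.topSet = P.topSet := by
  ext v
  have hv := congrFun h v
  unfold PathSystem.topVec at hv
  constructor
  · intro h1
    by_contra h2
    rw [Set.indicator_of_mem h1, Set.indicator_of_notMem h2] at hv
    exact one_ne_zero hv
  · intro h1
    by_contra h2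
    rw [Set.indicator_of_notMem h2, Set.indicator_of_mem h1] at hv
    exact zero_ne_one hv

namespace NNIConfig

open RBT PathSystem

variable {V : Type} [Fintype V] [DecidableEq V] {T T' : RBT V} (cfg : NNIConfig T T')

lemma lca_fwd {l1 l2 v : V} (h1 : T.isLeaf l1) (h2 : T.isLeaf l2)
    (hvb : v ≠ cfg.b) (hvc : v ≠ cfg.c) (h : T.isLCA l1 l2 v) : T'.isLCA l1 l2 v := by
  refine ⟨(cfg.desc_iff hvc).mpr h.1, (cfg.desc_iff hvc).mpr h.2.1, ?_⟩
  intro w hw1 hw2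
  by_cases hwc : w = cfg.c
  · subst hwc
    rcases cfg.desc'_c_iff.mp hw1 with h1c | h1e | h1f
    · exact absurd h1c (cfg.leaf_ne_c h1)
    · rcases cfg.desc'_c_iff.mp hw2 with h2c | h2e | h2f
      · exact absurd h2c (cfg.leaf_ne_c h2)
      · have hve : T.desc v cfg.e := h.2.2 cfg.e h1e h2e
        exact desc_trans' ((cfg.desc_iff cfg.e_ne_c).mpr hve) cfg.child'_e.desc
      · have hvb' : T.desc v cfg.b := h.2.2 cfg.b
          (desc_trans' (desc_trans' h1e cfg.child_e.desc) cfg.child_c.desc)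
          (desc_trans' h2f cfg.child_f.desc)
        rcases cfg.desc_b_cases hvb' with h' | h' | h'
        · exact absurd h' hvb
        · rcases cfg.desc_c_cases h' with h'' | h'' | h''
          · exact absurd h'' hvc
          · exact absurd h1e (fun q => cfg.disjDE (desc_trans' h.1 h'') q)
          · exact absurd h2f (fun q => cfg.disjEF (desc_trans' h.2.1 h'') q)
        · exact absurd h1e (fun q => cfg.disjEF q (desc_trans' h.1 h'))
    · rcases cfg.desc'_c_iff.mp hw2 with h2c | h2e | h2f
      · exact absurd h2c (cfg.leaf_ne_c h2)
      · have hvb' : T.desc v cfg.b := h.2.2 cfg.b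
          (desc_trans' h1f cfg.child_f.desc)
          (desc_trans' (desc_trans' h2e cfg.child_e.desc) cfg.child_c.desc)
        rcases cfg.desc_b_cases hvb' with h' | h' | h'
        · exact absurd h' hvb
        · rcases cfg.desc_c_cases h' with h'' | h'' | h''
          · exact absurd h'' hvc
          · exact absurd h2e (fun q => cfg.disjDE (desc_trans' h.2.1 h'') q)
          · exact absurd h1f (fun q => cfg.disjEF (desc_trans' h.1 h'') q)
        · exact absurd h2e (fun q => cfg.disjEF q (desc_trans' h.2.1 h'))
      · have hvf : T.desc v cfg.f := h.2.2 cfg.f h1f h2f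
        exact desc_trans' ((cfg.desc_iff cfg.fc_ne).mpr hvf) cfg.child_f'.desc
  · exact (cfg.desc_iff hwc).mpr
      (h.2.2 w ((cfg.desc_iff hwc).mp hw1) ((cfg.desc_iff hwc).mp hw2))

lemma lca_bwd {l1 l2 v : V} (h1 : T.isLeaf l1) (h2 : T.isLeaf l2)
    (hvb : v ≠ cfg.b) (hvc : v ≠ cfg.c) (h : T'.isLCA l1 l2 v) : T.isLCA l1 l2 v :=
  cfg.symm.lca_fwd (cfg.leaf_iff.mpr h1) (cfg.leaf_iff.mpr h2) hvb hvc h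

lemma edge_iff {l1 l2 α : V} (hα : α ≠ cfg.c) :
    α ∈ T'.pathEdges s(l1, l2) ↔ α ∈ T.pathEdges s(l1, l2) := by
  rw [mem_pathEdges, mem_pathEdges, cfg.root_eq, cfg.desc_iff hα, cfg.desc_iff hα]

lemma mem_edge'_c {l1 l2 : V} (h1 : T.isLeaf l1) (h2 : T.isLeaf l2) :
    cfg.c ∈ T'.pathEdges s(l1, l2) ↔
      ¬((T.desc l1 cfg.e ∨ T.desc l1 cfg.f) ↔ (T.desc l2 cfg.e ∨ T.desc l2 cfg.f)) := by
  rw [mem_pathEdges]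
  have e1 : T'.desc l1 cfg.c ↔ (T.desc l1 cfg.e ∨ T.desc l1 cfg.f) := by
    rw [cfg.desc'_c_iff]
    simp [cfg.leaf_ne_c h1]
  have e2 : T'.desc l2 cfg.c ↔ (T.desc l2 cfg.e ∨ T.desc l2 cfg.f) := by
    rw [cfg.desc'_c_iff]
    simp [cfg.leaf_ne_c h2]
  rw [e1, e2]
  simp [cfg.c_ne_root']

lemma aux_c_structure (P : PathSystem T) {l1 l2 v : V} (hl1 : T.isLeaf l1) (hl2 : T.isLeaf l2)
    (htop : T.isLCA l1 l2 v) (hvb : v ≠ cfg.b) (hvc : v ≠ cfg.c)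
    (hA1 : T.desc l1 cfg.e ∨ T.desc l1 cfg.f)
    (hA2 : ¬(T.desc l2 cfg.e ∨ T.desc l2 cfg.f)) :
    cfg.b ∈ T.pathEdges s(l1, l2) ∧
      (cfg.c ∈ T.pathEdges s(l1, l2) ∨ cfg.f ∈ T.pathEdges s(l1, l2)) := by
  have hd1b : T.desc l1 cfg.b := by
    rcases hA1 with h | h
    · exact desc_trans' (desc_trans' h cfg.child_e.desc) cfg.child_c.desc
    · exact desc_trans' h cfg.child_f.desc
  have hn2b : ¬ T.desc l2 cfg.b := by
    intro h2b
    have hvb' : T.desc v cfg.b := htop.2.2 cfg.b hd1b h2b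
    rcases cfg.desc_b_cases hvb' with h | h | h
    · exact hvb h
    · rcases cfg.desc_c_cases h with h' | h' | h'
      · exact hvc h'
      · rcases hA1 with he | hf'
        · exact cfg.disjDE (desc_trans' htop.1 h') he
        · exact cfg.disjDF (desc_trans' htop.1 h') hf'
      · exact hA2 (Or.inl (desc_trans' htop.2.1 h'))
    · exact hA2 (Or.inr (desc_trans' htop.2.1 h))
  constructor
  · rw [mem_pathEdges]
    exact ⟨cfg.b_ne_root, by tauto⟩
  · rcases hA1 with he | hf'
    · left
      rw [mem_pathEdges]
      have q1 : T.desc l1 cfg.c := desc_trans' he cfg.child_e.desc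
      have q2 : ¬ T.desc l2 cfg.c := fun h => hn2b (desc_trans' h cfg.child_c.desc)
      exact ⟨cfg.c_ne_root, by tauto⟩
    · right
      rw [mem_pathEdges]
      have q2 : ¬ T.desc l2 cfg.f := fun h => hA2 (Or.inr h)
      exact ⟨child_ne_root cfg.child_f, by tauto⟩

lemma edge'_c_structure (P : PathSystem T) {p : Sym2 V} (hp : p ∈ P.pairs) {v : V}
    (htop : T.isTopOf v p) (hvb : v ≠ cfg.b) (hvc : v ≠ cfg.c)
    (hc : cfg.c ∈ T'.pathEdges p) :
    cfg.b ∈ T.pathEdges p ∧ (cfg.c ∈ T.pathEdges p ∨ cfg.f ∈ T.pathEdges p) := by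
  induction p using Sym2.inductionOn with
  | hf l1 l2 =>
    have hl1 : T.isLeaf l1 := P.leaf_mem _ hp l1 (Sym2.mem_mk_left _ _)
    have hl2 : T.isLeaf l2 := P.leaf_mem _ hp l2 (Sym2.mem_mk_right _ _)
    rw [cfg.mem_edge'_c hl1 hl2] at hc
    rw [isTopOf_mk] at htop
    by_cases hA1 : (T.desc l1 cfg.e ∨ T.desc l1 cfg.f)
    · have hA2 : ¬(T.desc l2 cfg.e ∨ T.desc l2 cfg.f) := fun h => hc (iff_of_true hA1 h)
      exact cfg.aux_c_structure P hl1 hl2 htop hvb hvc hA1 hA2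
    · have hA2 : (T.desc l2 cfg.e ∨ T.desc l2 cfg.f) := by
        by_contra h
        exact hc (iff_of_false hA1 h)
      have hswap : s(l1, l2) = s(l2, l1) := Sym2.eq_swap
      rw [hswap]
      have htop' : T.isLCA l2 l1 v := ⟨htop.2.1, htop.1, fun w q1 q2 => htop.2.2 w q2 q1⟩
      exact cfg.aux_c_structure P hl2 hl1 htop' hvb hvc hA2 hA1

lemma not_b_and_c (P : PathSystem T) (hb : cfg.b ∈ P.topSet) (hc : cfg.c ∈ P.topSet) :
    False := by
  obtain ⟨p, hp, htp⟩ := hb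
  obtain ⟨q, hq, htq⟩ := hc
  have hpq : p ≠ q := by
    rintro rfl
    exact cfg.c_ne_b (isTopOf_unique htq htp)
  have hdq : cfg.d ∈ T.pathEdges q := P.child_edge_of_top hq htq cfg.child_d
  have heq : cfg.e ∈ T.pathEdges q := P.child_edge_of_top hq htq cfg.child_e
  obtain ⟨x, y, rfl, hlx, hly, hxc, hyf⟩ := P.top_pair_split hp cfg.child_c cfg.child_f
    (Ne.symm cfg.fc_ne) cfg.hTb htp
  rw [isTopOf_mk] at htp
  rcases cfg.desc_c_cases hxc with h | hxd | hxe
  · exact cfg.leaf_ne_c hlx h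
  · have hnyd : ¬ T.desc y cfg.d := fun h => cfg.disjDF h hyf
    have hmem : cfg.d ∈ T.pathEdges s(x, y) :=
      mem_pathEdges.mpr ⟨child_ne_root cfg.child_d, by tauto⟩
    exact Set.disjoint_left.mp (P.edge_disjoint hp hq hpq) hmem hdq
  · have hnye : ¬ T.desc y cfg.e := fun h => cfg.disjEF h hyf
    have hmem : cfg.e ∈ T.pathEdges s(x, y) :=
      mem_pathEdges.mpr ⟨child_ne_root cfg.child_e, by tauto⟩
    exact Set.disjoint_left.mp (P.edge_disjoint hp hq hpq) hmem heq

end NNIConfig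


namespace RBT

variable {V : Type} [Fintype V] [DecidableEq V] {T : RBT V}

lemma mem_pathEdges_elim {p : Sym2 V} {α : V} (h : α ∈ T.pathEdges p) :
    ∃ z z', p = s(z, z') ∧ T.desc z α ∧ ¬ T.desc z' α := by
  induction p using Sym2.inductionOn with
  | hf l1 l2 =>
    rw [mem_pathEdges] at h
    by_cases h1 : T.desc l1 α
    · exact ⟨l1, l2, rfl, h1, fun h2 => h.2 (iff_of_true h1 h2)⟩
    · have h2 : T.desc l2 α := by
        by_contra h2
        exact h.2 (iff_of_false h1 h2)
      exact ⟨l2, l1, Sym2.eq_swap, h2, h1⟩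

lemma edge_desc_top {r : Sym2 V} {t α : V} (ht : T.isTopOf t r) (hα : α ∈ T.pathEdges r) :
    T.desc α t := by
  obtain ⟨z, z', hzz', hz, hz'⟩ := mem_pathEdges_elim hα
  subst hzz'
  rw [isTopOf_mk] at ht
  rcases desc_comp hz ht.1 with h | h
  · exact h
  · exact absurd (desc_trans' ht.2.1 h) hz'

lemma mem_pathEdges_intro {l1 l2 α : V} (hroot : α ≠ T.root) (h1 : T.desc l1 α)
    (h2 : ¬ T.desc l2 α) : α ∈ T.pathEdges s(l1, l2) :=
  mem_pathEdges.mpr ⟨hroot, fun h => h2 (h.mp h1)⟩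

end RBT

namespace NNIConfig

open RBT PathSystem

variable {V : Type} [Fintype V] [DecidableEq V] {T T' : RBT V} (cfg : NNIConfig T T')

lemma edge_iff' {p : Sym2 V} {α : V} (hα : α ≠ cfg.c) :
    α ∈ T'.pathEdges p ↔ α ∈ T.pathEdges p := by
  induction p using Sym2.inductionOn with
  | hf l1 l2 => exact cfg.edge_iff hα

lemma isTopOf_fwd (P : PathSystem T) {r : Sym2 V} (hr : r ∈ P.pairs) {t : V}
    (ht : T.isTopOf t r) (htb : t ≠ cfg.b) (htc : t ≠ cfg.c) : T'.isTopOf t r := by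
  induction r using Sym2.inductionOn with
  | hf l1 l2 =>
    exact cfg.lca_fwd (P.leaf_mem _ hr l1 (Sym2.mem_mk_left _ _))
      (P.leaf_mem _ hr l2 (Sym2.mem_mk_right _ _)) htb htc ht

/-- The LCA in `T'` of a pair consisting of a leaf below `d` and a leaf below `e` or `f`
is `b`. -/
lemma lca'_db {x y : V} (hx : T.desc x cfg.d) (hy : T.desc y cfg.e ∨ T.desc y cfg.f) :
    T'.isLCA x y cfg.b :=
  lca_of_split cfg.child_d' cfg.child'_c (fun h => cfg.d_ne_c h) cfg.hT'b
    ((cfg.desc_iff cfg.d_ne_c).mpr hx) (cfg.desc'_c_iff.mpr (Or.inr hy))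

/-- The LCA in `T'` of a pair consisting of a leaf below `e` and a leaf below `f`
is `c`. -/
lemma lca'_efc {x y : V} (hx : T.desc x cfg.e) (hy : T.desc y cfg.f) :
    T'.isLCA x y cfg.c :=
  lca_of_split cfg.child'_e cfg.child_f' cfg.e_ne_f cfg.hT'c
    ((cfg.desc_iff cfg.e_ne_c).mpr hx) ((cfg.desc_iff cfg.fc_ne).mpr hy)

end NNIConfig


namespace NNIConfig

open RBT PathSystem

variable {V : Type} [Fintype V] [DecidableEq V] {T T' : RBT V} (cfg : NNIConfig T T')

lemma maintain_i (P : PathSystem T) (hb : cfg.b ∉ P.topSet) (hc : cfg.c ∉ P.topSet) :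
    ∃ Q : PathSystem T', Q.topSet = P.topSet := by
  have htops : ∀ r ∈ P.pairs, ∃ t, T.isTopOf t r ∧ t ≠ cfg.b ∧ t ≠ cfg.c := by
    intro r hr
    obtain ⟨t, ht⟩ := PathSystem.top_exists (T := T) r
    refine ⟨t, ht, ?_, ?_⟩
    · rintro rfl; exact hb ⟨r, hr, ht⟩
    · rintro rfl; exact hc ⟨r, hr, ht⟩
  refine ⟨⟨P.pairs, ?_, P.not_diag, ?_⟩, ?_⟩
  · intro p hp l hl
    exact cfg.leaf_iff.mpr (P.leaf_mem p hp l hl)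
  · intro p hp q hq hne
    rw [Set.disjoint_left]
    intro α hα1 hα2
    rw [Finset.mem_coe] at hp hq
    by_cases hαc : α = cfg.c
    · subst hαc
      obtain ⟨t1, ht1, ht1b, ht1c⟩ := htops p hp
      obtain ⟨t2, ht2, ht2b, ht2c⟩ := htops q hq
      have s1 := cfg.edge'_c_structure P hp ht1 ht1b ht1c hα1
      have s2 := cfg.edge'_c_structure P hq ht2 ht2b ht2c hα2
      exact Set.disjoint_left.mp (P.edge_disjoint hp hq hne) s1.1 s2.1
    · exact Set.disjoint_left.mp (P.edge_disjoint hp hq hne)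
        ((cfg.edge_iff' hαc).mp hα1) ((cfg.edge_iff' hαc).mp hα2)
  · ext v
    simp only [PathSystem.topSet, Set.mem_setOf_eq]
    constructor
    · rintro ⟨r, hr, htv⟩
      obtain ⟨t, ht, htb, htc⟩ := htops r hr
      have := cfg.isTopOf_fwd P hr ht htb htc
      exact ⟨r, hr, (isTopOf_unique htv this) ▸ ht⟩
    · rintro ⟨r, hr, htv⟩
      have hvb : v ≠ cfg.b := by rintro rfl; exact hb ⟨r, hr, htv⟩
      have hvc : v ≠ cfg.c := by rintro rfl; exact hc ⟨r, hr, htv⟩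
      exact ⟨r, hr, cfg.isTopOf_fwd P hr htv hvb hvc⟩

lemma not_blocked_d_of_maintained (P : PathSystem T) (hb : cfg.b ∈ P.topSet)
    (hm : IsTopVecOf T' P.topVec) : ¬ T.blocked cfg.d P.topSet := by
  obtain ⟨Q, hQ⟩ := hm
  have hS : Q.topSet = P.topSet := topSet_eq_of_topVec_eq hQ
  rw [← hS] at hb ⊢
  obtain ⟨p, hp, htp⟩ := hb
  obtain ⟨z, y, rfl, hlz, hly, hzd, hyc⟩ := Q.top_pair_split hp cfg.child_d' cfg.child'_c
    (fun h => cfg.d_ne_c h) cfg.hT'b htp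
  intro hblocked
  obtain ⟨w', hw'S, hzw', hw'd⟩ := hblocked z (cfg.leaf_iff.mp hlz)
    ((cfg.desc_iff cfg.d_ne_c).mp hzd)
  have hw'c : w' ≠ cfg.c := by
    rintro rfl
    exact cfg.d_ne_c (desc_antisymm' hw'd cfg.child_d.desc).symm
  have hzw'' : T'.desc z w' := (cfg.desc_iff hw'c).mpr hzw'
  have hw'd' : T'.desc w' cfg.d := (cfg.desc_iff cfg.d_ne_c).mpr hw'd
  have hw'b : T'.desc w' cfg.b := desc_trans' hw'd' cfg.child_d'.desc
  have hw'ne : w' ≠ cfg.b := by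
    rintro rfl
    exact cfg.b_ne_d (desc_antisymm' cfg.child_d'.desc hw'd').symm
  exact Q.no_top_between hp (Sym2.mem_mk_left _ _) htp hw'S hzw'' hw'b hw'ne

lemma not_blocked_f_of_maintained (P : PathSystem T) (hc : cfg.c ∈ P.topSet)
    (hm : IsTopVecOf T' P.topVec) : ¬ T.blocked cfg.f P.topSet := by
  obtain ⟨Q, hQ⟩ := hm
  have hS : Q.topSet = P.topSet := topSet_eq_of_topVec_eq hQ
  rw [← hS] at hc ⊢
  obtain ⟨p, hp, htp⟩ := hc
  obtain ⟨z, y, rfl, hlz, hly, hzf, hye⟩ := Q.top_pair_split hp cfg.child_f' cfg.child'_e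
    (fun h => cfg.e_ne_f h.symm) (fun u hu => (cfg.hT'c u hu).symm) htp
  intro hblocked
  obtain ⟨w', hw'S, hzw', hw'f⟩ := hblocked z (cfg.leaf_iff.mp hlz)
    ((cfg.desc_iff cfg.fc_ne).mp hzf)
  have hw'c : w' ≠ cfg.c := by
    rintro rfl
    have : T.desc cfg.f cfg.b := cfg.child_f.desc
    obtain ⟨k, hk⟩ := hw'f
    rcases Nat.eq_zero_or_pos k with h0 | hpos
    · exact cfg.fc_ne (by rw [← hk, h0]; rfl)
    · have : T.desc cfg.b cfg.f := by
        refine ⟨k - 1, ?_⟩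
        rw [← cfg.child_c.1]
        have h1 : T.parent^[k - 1] (T.parent cfg.c) = T.parent^[k - 1 + 1] cfg.c :=
          (Function.iterate_succ_apply _ _ _).symm
        rw [h1, (by omega : k - 1 + 1 = k)]
        exact hk
      exact cfg.f_ne_b (desc_antisymm' cfg.child_f.desc this)
  have hzw'' : T'.desc z w' := (cfg.desc_iff hw'c).mpr hzw'
  have hw'f' : T'.desc w' cfg.f := (cfg.desc_iff cfg.fc_ne).mpr hw'f
  have hw'cd : T'.desc w' cfg.c := desc_trans' hw'f' cfg.child_f'.desc
  exact Q.no_top_between hp (Sym2.mem_mk_left _ _) htp hw'S hzw'' hw'cd hw'c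

end NNIConfig


namespace NNIConfig

open RBT PathSystem

variable {V : Type} [Fintype V] [DecidableEq V] {T T' : RBT V} (cfg : NNIConfig T T')

section CaseII

variable (P : PathSystem T) {x y : V}

/-- Subcase of (ii): the endpoint of the `b`-top path on the `c` side lies below `d`.
The same system of paths works in `T'`. -/
lemma maintain_iiA1 (hp0 : s(x, y) ∈ P.pairs) (htp0 : T.isTopOf cfg.b s(x, y))
    (hxd : T.desc x cfg.d) (hyf : T.desc y cfg.f) (hcS : cfg.c ∉ P.topSet) :
    ∃ Q : PathSystem T', Q.topSet = P.topSet := by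
  have hold : ∀ r ∈ P.pairs, r ≠ s(x, y) →
      ∃ t, T.isTopOf t r ∧ t ≠ cfg.b ∧ t ≠ cfg.c := by
    intro r hr hne
    obtain ⟨t, ht⟩ := PathSystem.top_exists (T := T) r
    refine ⟨t, ht, ?_, ?_⟩
    · rintro rfl; exact hne (P.top_unique_pair hr hp0 ht htp0)
    · rintro rfl; exact hcS ⟨r, hr, ht⟩
  have hnxf : ¬ T.desc x cfg.f := fun h => cfg.disjDF hxd h
  have hxc : T.desc x cfg.c := desc_trans' hxd cfg.child_d.desc
  have hnyc : ¬ T.desc y cfg.c := fun h => cfg.disjCF h hyf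
  have hcp0 : cfg.c ∈ T.pathEdges s(x, y) :=
    mem_pathEdges.mpr ⟨cfg.c_ne_root, by tauto⟩
  have hfp0 : cfg.f ∈ T.pathEdges s(x, y) :=
    mem_pathEdges.mpr ⟨child_ne_root cfg.child_f, by tauto⟩
  have key_old_c : ∀ r ∈ P.pairs, r ≠ s(x, y) → cfg.c ∉ T'.pathEdges r := by
    intro r hr hne hmem
    obtain ⟨t, ht, htb, htc⟩ := hold r hr hne
    have s := cfg.edge'_c_structure P hr ht htb htc hmem
    rcases s.2 with h | h
    · exact Set.disjoint_left.mp (P.edge_disjoint hr hp0 hne) h hcp0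
    · exact Set.disjoint_left.mp (P.edge_disjoint hr hp0 hne) h hfp0
  have htp0' : T'.isTopOf cfg.b s(x, y) := isTopOf_mk.mpr (cfg.lca'_db hxd (Or.inr hyf))
  refine ⟨⟨P.pairs, ?_, P.not_diag, ?_⟩, ?_⟩
  · intro p hp l hl
    exact cfg.leaf_iff.mpr (P.leaf_mem p hp l hl)
  · intro p hp q hq hne
    rw [Set.disjoint_left]
    intro α hα1 hα2
    rw [Finset.mem_coe] at hp hq
    by_cases hαc : α = cfg.c
    · subst hαc
      by_cases hpp : p = s(x, y)
      · exact key_old_c q hq (fun h => hne (hpp.trans h.symm)) hα2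
      · exact key_old_c p hp hpp hα1
    · exact Set.disjoint_left.mp (P.edge_disjoint hp hq hne)
        ((cfg.edge_iff' hαc).mp hα1) ((cfg.edge_iff' hαc).mp hα2)
  · ext v
    simp only [PathSystem.topSet, Set.mem_setOf_eq]
    constructor
    · rintro ⟨r, hr, htv⟩
      by_cases hrp : r = s(x, y)
      · subst hrp
        exact ⟨s(x, y), hp0, (isTopOf_unique htv htp0') ▸ htp0⟩
      · obtain ⟨t, ht, htb, htc⟩ := hold r hr hrp
        have := cfg.isTopOf_fwd P hr ht htb htc
        exact ⟨r, hr, (isTopOf_unique htv this) ▸ ht⟩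
    · rintro ⟨r, hr, htv⟩
      by_cases hrp : r = s(x, y)
      · subst hrp
        exact ⟨s(x, y), hp0, (isTopOf_unique htv htp0) ▸ htp0'⟩
      · have hvb : v ≠ cfg.b := by
          rintro rfl
          exact hrp (P.top_unique_pair hr hp0 htv htp0)
        have hvc : v ≠ cfg.c := by rintro rfl; exact hcS ⟨r, hr, htv⟩
        exact ⟨r, hr, cfg.isTopOf_fwd P hr htv hvb hvc⟩

end CaseII

end NNIConfig


namespace NNIConfig

open RBT PathSystem

variable {V : Type} [Fintype V] [DecidableEq V] {T T' : RBT V} (cfg : NNIConfig T T')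

/-- Subcase of (ii): the endpoint of the `b`-top path on the `c` side lies below `e`.
Replace the `b`-top path by a path from an unblocked leaf below `d` to `y`. -/
lemma maintain_iiA2 (P : PathSystem T) {x y l : V} (hp0 : s(x, y) ∈ P.pairs)
    (htp0 : T.isTopOf cfg.b s(x, y))
    (hxe : T.desc x cfg.e) (hyf : T.desc y cfg.f) (hcS : cfg.c ∉ P.topSet)
    (hll : T.isLeaf l) (hld : T.desc l cfg.d)
    (hfree : ∀ w ∈ P.topSet, ¬(T.desc l w ∧ T.desc w cfg.d)) :
    ∃ Q : PathSystem T', Q.topSet = P.topSet := by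
  have hold : ∀ r ∈ P.pairs, r ≠ s(x, y) →
      ∃ t, T.isTopOf t r ∧ t ≠ cfg.b ∧ t ≠ cfg.c := by
    intro r hr hne
    obtain ⟨t, ht⟩ := PathSystem.top_exists (T := T) r
    refine ⟨t, ht, ?_, ?_⟩
    · rintro rfl; exact hne (P.top_unique_pair hr hp0 ht htp0)
    · rintro rfl; exact hcS ⟨r, hr, ht⟩
  have hnxf : ¬ T.desc x cfg.f := fun h => cfg.disjEF hxe h
  have hxc : T.desc x cfg.c := desc_trans' hxe cfg.child_e.desc
  have hnyc : ¬ T.desc y cfg.c := fun h => cfg.disjCF h hyf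
  have hcp0 : cfg.c ∈ T.pathEdges s(x, y) :=
    mem_pathEdges.mpr ⟨cfg.c_ne_root, by tauto⟩
  have hfp0 : cfg.f ∈ T.pathEdges s(x, y) :=
    mem_pathEdges.mpr ⟨child_ne_root cfg.child_f, by tauto⟩
  have key_old_c : ∀ r ∈ P.pairs, r ≠ s(x, y) → cfg.c ∉ T'.pathEdges r := by
    intro r hr hne hmem
    obtain ⟨t, ht, htb, htc⟩ := hold r hr hne
    have s := cfg.edge'_c_structure P hr ht htb htc hmem
    rcases s.2 with h | h
    · exact Set.disjoint_left.mp (P.edge_disjoint hr hp0 hne) h hcp0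
    · exact Set.disjoint_left.mp (P.edge_disjoint hr hp0 hne) h hfp0
  have no_d_edge : ∀ r ∈ P.pairs, cfg.d ∉ T.pathEdges r := by
    intro r hr hmem
    obtain ⟨z, z', hzz', hz, hz'⟩ := mem_pathEdges_elim hmem
    subst hzz'
    have hlz' : T.isLeaf z' := P.leaf_mem _ hr z' (Sym2.mem_mk_right _ _)
    have hrne : s(z, z') ≠ s(x, y) := by
      intro h
      rcases Sym2.eq_iff.mp h with ⟨h1, h2⟩ | ⟨h1, h2⟩
      · exact cfg.disjDE (h1 ▸ hz) hxe
      · exact cfg.disjDF (h1 ▸ hz) hyf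
    by_cases hz'b : T.desc z' cfg.b
    · rcases cfg.desc_b_cases hz'b with h | h | h
      · exact cfg.leaf_ne_b hlz' h
      · rcases cfg.desc_c_cases h with h' | h' | h'
        · exact cfg.leaf_ne_c hlz' h'
        · exact hz' h'
        · exact hcS ⟨s(z, z'), hr, isTopOf_mk.mpr
            (lca_of_split cfg.child_d cfg.child_e cfg.de_ne cfg.hTc hz h')⟩
      · have hlca : T.isLCA z z' cfg.b := lca_of_split cfg.child_c cfg.child_f
          (Ne.symm cfg.fc_ne) cfg.hTb (desc_trans' hz cfg.child_d.desc) h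
        exact hrne (P.top_unique_pair hr hp0 (isTopOf_mk.mpr hlca) htp0)
    · have hzc : T.desc z cfg.c := desc_trans' hz cfg.child_d.desc
      have hz'c : ¬ T.desc z' cfg.c := fun h => hz'b (desc_trans' h cfg.child_c.desc)
      have hmemc : cfg.c ∈ T.pathEdges s(z, z') :=
        mem_pathEdges.mpr ⟨cfg.c_ne_root, by tauto⟩
      exact Set.disjoint_left.mp (P.edge_disjoint hr hp0 hrne) hmemc hcp0
  have hnle : ¬ T.desc l cfg.e := fun h => cfg.disjDE hld h
  have hnlf : ¬ T.desc l cfg.f := fun h => cfg.disjDF hld h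
  have htnew' : T'.isTopOf cfg.b s(l, y) := isTopOf_mk.mpr (cfg.lca'_db hld (Or.inr hyf))
  have key_new_old : ∀ r ∈ P.pairs, r ≠ s(x, y) →
      ∀ α, α ∈ T'.pathEdges s(l, y) → α ∈ T'.pathEdges r → False := by
    intro r hr hrne α hα1 hα2
    by_cases hαc : α = cfg.c
    · exact key_old_c r hr hrne (hαc ▸ hα2)
    · have hα2T := (cfg.edge_iff' hαc).mp hα2
      obtain ⟨hαroot, hxor⟩ := mem_pathEdges.mp hα1
      rw [cfg.root_eq] at hαroot
      rw [cfg.desc_iff hαc, cfg.desc_iff hαc] at hxor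
      obtain ⟨t, ht, htb, htc⟩ := hold r hr hrne
      have hαt : T.desc α t := edge_desc_top ht hα2T
      by_cases hlα : T.desc l α
      · have hnyα : ¬ T.desc y α := fun h => hxor (iff_of_true hlα h)
        by_cases hαd : T.desc α cfg.d
        · by_cases htd : T.desc t cfg.d
          · exact hfree t ⟨r, hr, ht⟩ ⟨desc_trans' hlα hαt, htd⟩
          · have hdt : T.desc cfg.d t := (desc_comp hαd hαt).resolve_right htd
            have htd' : t ≠ cfg.d := fun h => htd (h ▸ T.desc_refl' cfg.d)
            have hct : T.desc cfg.c t :=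
              desc_of_child_desc cfg.child_d hdt (fun h => htd' h.symm)
            have hbt : T.desc cfg.b t :=
              desc_of_child_desc cfg.child_c hct (fun h => htc h.symm)
            obtain ⟨m, m', hmm', hm, hm'⟩ := mem_pathEdges_elim hα2T
            subst hmm'
            have hlm' : T.isLeaf m' := P.leaf_mem _ hr m' (Sym2.mem_mk_right _ _)
            have hlcar : T.isLCA m m' t := isTopOf_mk.mp ht
            have hmd : T.desc m cfg.d := desc_trans' hm hαd
            by_cases hm'b : T.desc m' cfg.b
            · rcases cfg.desc_b_cases hm'b with h | h | h
              · exact cfg.leaf_ne_b hlm' h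
              · rcases cfg.desc_c_cases h with h' | h' | h'
                · exact cfg.leaf_ne_c hlm' h'
                · exact htd (hlcar.2.2 cfg.d hmd h')
                · exact htc (isLCA_unique hlcar
                    (lca_of_split cfg.child_d cfg.child_e cfg.de_ne cfg.hTc hmd h'))
              · exact htb (isLCA_unique hlcar
                  (lca_of_split cfg.child_c cfg.child_f (Ne.symm cfg.fc_ne) cfg.hTb
                    (desc_trans' hmd cfg.child_d.desc) h))
            · have hnm'd : ¬ T.desc m' cfg.d := fun h =>
                hm'b (desc_trans' h (desc_trans' cfg.child_d.desc cfg.child_c.desc))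
              have : cfg.d ∈ T.pathEdges s(m, m') :=
                mem_pathEdges.mpr ⟨child_ne_root cfg.child_d, by tauto⟩
              exact no_d_edge _ hr this
        · have hdα : T.desc cfg.d α := (desc_comp hld hlα).resolve_right hαd
          have hαd' : α ≠ cfg.d := fun h => hαd (h ▸ T.desc_refl' cfg.d)
          have hcα : T.desc cfg.c α :=
            desc_of_child_desc cfg.child_d hdα (fun h => hαd' h.symm)
          have hbα : T.desc cfg.b α :=
            desc_of_child_desc cfg.child_c hcα (fun h => hαc h.symm)
          exact hnyα (desc_trans' (desc_trans' hyf cfg.child_f.desc) hbα)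
      · have hyα : T.desc y α := by
          by_contra h
          exact hxor (iff_of_false hlα h)
        by_cases hbα : T.desc cfg.b α
        · exact hlα (desc_trans' (desc_trans' hld
            (desc_trans' cfg.child_d.desc cfg.child_c.desc)) hbα)
        · have hαb : T.desc α cfg.b :=
            (desc_comp hyα (desc_trans' hyf cfg.child_f.desc)).resolve_right hbα
          rcases cfg.desc_b_cases hαb with h | h | h
          · exact hbα (h ▸ T.desc_refl' cfg.b)
          · exact cfg.disjCF (desc_trans' hyα h) hyf
          · have hnxα : ¬ T.desc x α := fun h' => cfg.disjEF hxe (desc_trans' h' h)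
            have hmem0 : α ∈ T.pathEdges s(x, y) :=
              mem_pathEdges.mpr ⟨hαroot, by tauto⟩
            exact Set.disjoint_left.mp (P.edge_disjoint hr hp0 hrne) hα2T hmem0
  refine ⟨⟨insert s(l, y) (P.pairs.erase s(x, y)), ?_, ?_, ?_⟩, ?_⟩
  · intro p hp lf hlf
    rcases Finset.mem_insert.mp hp with rfl | hp'
    · rcases Sym2.mem_iff.mp hlf with h | h
      · exact h.symm ▸ cfg.leaf_iff.mpr hll
      · exact h.symm ▸ cfg.leaf_iff.mpr (P.leaf_mem _ hp0 y (Sym2.mem_mk_right _ _))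
    · exact cfg.leaf_iff.mpr (P.leaf_mem p (Finset.mem_of_mem_erase hp') lf hlf)
  · intro p hp
    rcases Finset.mem_insert.mp hp with rfl | hp'
    · intro h
      exact cfg.disjDF ((Sym2.mk_isDiag_iff.mp h) ▸ hld) hyf
    · exact P.not_diag p (Finset.mem_of_mem_erase hp')
  · intro p hp q hq hne
    rw [Finset.coe_insert, Set.mem_insert_iff, Finset.mem_coe, Finset.mem_erase] at hp hq
    rcases hp with rfl | ⟨hpne, hp⟩
    · rcases hq with rfl | ⟨hqne, hq⟩
      · exact absurd rfl hne
      · exact Set.disjoint_left.mpr (fun α h1 h2 => key_new_old q hq hqne α h1 h2)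
    · rcases hq with rfl | ⟨hqne, hq⟩
      · exact (Set.disjoint_left.mpr (fun α h1 h2 => key_new_old p hp hpne α h1 h2)).symm
      · rw [Set.disjoint_left]
        intro α hα1 hα2
        by_cases hαc : α = cfg.c
        · exact key_old_c p hp hpne (hαc ▸ hα1)
        · exact Set.disjoint_left.mp (P.edge_disjoint hp hq hne)
            ((cfg.edge_iff' hαc).mp hα1) ((cfg.edge_iff' hαc).mp hα2)
  · ext v
    simp only [PathSystem.topSet, Set.mem_setOf_eq]
    constructor
    · rintro ⟨r, hr, htv⟩
      rcases Finset.mem_insert.mp hr with rfl | hr'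
      · exact ⟨s(x, y), hp0, (isTopOf_unique htv htnew') ▸ htp0⟩
      · obtain ⟨hrne, hr''⟩ := Finset.mem_erase.mp hr'
        obtain ⟨t, ht, htb, htc⟩ := hold r hr'' hrne
        have := cfg.isTopOf_fwd P hr'' ht htb htc
        exact ⟨r, hr'', (isTopOf_unique htv this) ▸ ht⟩
    · rintro ⟨r, hr, htv⟩
      by_cases hrp : r = s(x, y)
      · subst hrp
        exact ⟨s(l, y), Finset.mem_insert_self _ _, (isTopOf_unique htv htp0) ▸ htnew'⟩
      · have hvb : v ≠ cfg.b := by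
          rintro rfl
          exact hrp (P.top_unique_pair hr hp0 htv htp0)
        have hvc : v ≠ cfg.c := by rintro rfl; exact hcS ⟨r, hr, htv⟩
        exact ⟨r, Finset.mem_insert_of_mem (Finset.mem_erase.mpr ⟨hrp, hr⟩),
          cfg.isTopOf_fwd P hr htv hvb hvc⟩

end NNIConfig


namespace RBT

variable {V : Type} [Fintype V] [DecidableEq V] {T : RBT V}

lemma isLCA_comm {l1 l2 v : V} (h : T.isLCA l1 l2 v) : T.isLCA l2 l1 v :=
  ⟨h.2.1, h.1, fun w a b => h.2.2 w b a⟩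

end RBT

namespace NNIConfig

open RBT PathSystem

variable {V : Type} [Fintype V] [DecidableEq V] {T T' : RBT V} (cfg : NNIConfig T T')

section CaseIII

variable (P : PathSystem T) {u v : V}

/-- In case (iii) (`c` is a top, `b` is not), no path of the system uses the edge of `T`
above `c`. -/
lemma no_c_edge_iii (hp0 : s(u, v) ∈ P.pairs) (htp0 : T.isTopOf cfg.c s(u, v))
    (hud : T.desc u cfg.d) (hve : T.desc v cfg.e) (hbS : cfg.b ∉ P.topSet) :
    ∀ r ∈ P.pairs, cfg.c ∉ T.pathEdges r := by
  have hnvd : ¬ T.desc v cfg.d := fun h => cfg.disjDE h hve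
  have hnue : ¬ T.desc u cfg.e := fun h => cfg.disjDE hud h
  have hdpc : cfg.d ∈ T.pathEdges s(u, v) :=
    mem_pathEdges.mpr ⟨child_ne_root cfg.child_d, by tauto⟩
  have hepc : cfg.e ∈ T.pathEdges s(u, v) :=
    mem_pathEdges.mpr ⟨child_ne_root cfg.child_e, by tauto⟩
  intro r hr hmem
  obtain ⟨z, z', hzz', hz, hz'⟩ := mem_pathEdges_elim hmem
  subst hzz'
  have hlz : T.isLeaf z := P.leaf_mem _ hr z (Sym2.mem_mk_left _ _)
  have hlz' : T.isLeaf z' := P.leaf_mem _ hr z' (Sym2.mem_mk_right _ _)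
  by_cases hz'b : T.desc z' cfg.b
  · rcases cfg.desc_b_cases hz'b with h | h | h
    · exact cfg.leaf_ne_b hlz' h
    · exact hz' h
    · exact hbS ⟨s(z, z'), hr, isTopOf_mk.mpr
        (lca_of_split cfg.child_c cfg.child_f (Ne.symm cfg.fc_ne) cfg.hTb hz h)⟩
  · have hrne : s(z, z') ≠ s(u, v) := by
      intro h
      rcases Sym2.eq_iff.mp h with ⟨h1, h2⟩ | ⟨h1, h2⟩
      · exact hz' (h2 ▸ desc_trans' hve cfg.child_e.desc)
      · exact hz' (h2 ▸ desc_trans' hud cfg.child_d.desc)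
    rcases cfg.desc_c_cases hz with h | hzd | hze
    · exact cfg.leaf_ne_c hlz h
    · have hnz'd : ¬ T.desc z' cfg.d := fun h => hz' (desc_trans' h cfg.child_d.desc)
      have : cfg.d ∈ T.pathEdges s(z, z') :=
        mem_pathEdges.mpr ⟨child_ne_root cfg.child_d, by tauto⟩
      exact Set.disjoint_left.mp (P.edge_disjoint hr hp0 hrne) this hdpc
    · have hnz'e : ¬ T.desc z' cfg.e := fun h => hz' (desc_trans' h cfg.child_e.desc)
      have : cfg.e ∈ T.pathEdges s(z, z') :=
        mem_pathEdges.mpr ⟨child_ne_root cfg.child_e, by tauto⟩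
      exact Set.disjoint_left.mp (P.edge_disjoint hr hp0 hrne) this hepc

/-- Subcase of (iii): no path of the system uses the edge of `T` above `f`.
Replace the `c`-top path by a path from `v` to an unblocked leaf below `f`. -/
lemma maintain_iii2 {l : V} (hp0 : s(u, v) ∈ P.pairs) (htp0 : T.isTopOf cfg.c s(u, v))
    (hud : T.desc u cfg.d) (hve : T.desc v cfg.e) (hbS : cfg.b ∉ P.topSet)
    (hll : T.isLeaf l) (hlf : T.desc l cfg.f)
    (hfree : ∀ w ∈ P.topSet, ¬(T.desc l w ∧ T.desc w cfg.f))
    (hnof : ∀ r ∈ P.pairs, cfg.f ∉ T.pathEdges r) :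
    ∃ Q : PathSystem T', Q.topSet = P.topSet := by
  have hold : ∀ r ∈ P.pairs, r ≠ s(u, v) →
      ∃ t, T.isTopOf t r ∧ t ≠ cfg.b ∧ t ≠ cfg.c := by
    intro r hr hne
    obtain ⟨t, ht⟩ := PathSystem.top_exists (T := T) r
    refine ⟨t, ht, ?_, ?_⟩
    · rintro rfl; exact hbS ⟨r, hr, ht⟩
    · rintro rfl; exact hne (P.top_unique_pair hr hp0 ht htp0)
  have hnoc := cfg.no_c_edge_iii P hp0 htp0 hud hve hbS
  have key_old_c : ∀ r ∈ P.pairs, r ≠ s(u, v) → cfg.c ∉ T'.pathEdges r := by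
    intro r hr hne hmem
    obtain ⟨t, ht, htb, htc⟩ := hold r hr hne
    have s := cfg.edge'_c_structure P hr ht htb htc hmem
    rcases s.2 with h | h
    · exact hnoc r hr h
    · exact hnof r hr h
  have htnew' : T'.isTopOf cfg.c s(v, l) := isTopOf_mk.mpr (cfg.lca'_efc hve hlf)
  have hub : T.desc u cfg.b := desc_trans' (desc_trans' hud cfg.child_d.desc) cfg.child_c.desc
  have hvb : T.desc v cfg.b := desc_trans' (desc_trans' hve cfg.child_e.desc) cfg.child_c.desc
  have hlb : T.desc l cfg.b := desc_trans' hlf cfg.child_f.desc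
  have hlcauv : T.isLCA u v cfg.c := isTopOf_mk.mp htp0
  have key_new_old : ∀ r ∈ P.pairs, r ≠ s(u, v) →
      ∀ α, α ∈ T'.pathEdges s(v, l) → α ∈ T'.pathEdges r → False := by
    intro r hr hrne α hα1 hα2
    by_cases hαc : α = cfg.c
    · exact key_old_c r hr hrne (hαc ▸ hα2)
    · have hα2T := (cfg.edge_iff' hαc).mp hα2
      obtain ⟨hαroot, hxor⟩ := mem_pathEdges.mp hα1
      rw [cfg.root_eq] at hαroot
      rw [cfg.desc_iff hαc, cfg.desc_iff hαc] at hxor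
      obtain ⟨t, ht, htb, htc⟩ := hold r hr hrne
      have hαt : T.desc α t := edge_desc_top ht hα2T
      by_cases hvα : T.desc v α
      · have hnlα : ¬ T.desc l α := fun h => hxor (iff_of_true hvα h)
        by_cases huα : T.desc u α
        · have hcα : T.desc cfg.c α := hlcauv.2.2 α huα hvα
          have hbα : T.desc cfg.b α :=
            desc_of_child_desc cfg.child_c hcα (fun h => hαc h.symm)
          exact hnlα (desc_trans' hlb hbα)
        · have hmem0 : α ∈ T.pathEdges s(u, v) :=
            mem_pathEdges.mpr ⟨hαroot, by tauto⟩
          exact Set.disjoint_left.mp (P.edge_disjoint hr hp0 hrne) hα2T hmem0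
      · have hlα : T.desc l α := by
          by_contra h
          exact hxor (iff_of_false hvα h)
        by_cases hαf : T.desc α cfg.f
        · by_cases htf : T.desc t cfg.f
          · exact hfree t ⟨r, hr, ht⟩ ⟨desc_trans' hlα hαt, htf⟩
          · have hft : T.desc cfg.f t := (desc_comp hαf hαt).resolve_right htf
            have htf' : t ≠ cfg.f := fun h => htf (h ▸ T.desc_refl' cfg.f)
            have hbt : T.desc cfg.b t :=
              desc_of_child_desc cfg.child_f hft (fun h => htf' h.symm)
            obtain ⟨m, m', hmm', hm, hm'⟩ := mem_pathEdges_elim hα2T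
            subst hmm'
            have hlm' : T.isLeaf m' := P.leaf_mem _ hr m' (Sym2.mem_mk_right _ _)
            have hlcar : T.isLCA m m' t := isTopOf_mk.mp ht
            have hmf : T.desc m cfg.f := desc_trans' hm hαf
            by_cases hm'b : T.desc m' cfg.b
            · rcases cfg.desc_b_cases hm'b with h | h | h
              · exact cfg.leaf_ne_b hlm' h
              · exact htb (isLCA_unique hlcar (isLCA_comm
                  (lca_of_split cfg.child_c cfg.child_f (Ne.symm cfg.fc_ne) cfg.hTb h hmf)))
              · exact htf (hlcar.2.2 cfg.f hmf h)
            · have hnm'f : ¬ T.desc m' cfg.f := fun h =>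
                hm'b (desc_trans' h cfg.child_f.desc)
              have : cfg.f ∈ T.pathEdges s(m, m') :=
                mem_pathEdges.mpr ⟨child_ne_root cfg.child_f, by tauto⟩
              exact hnof _ hr this
        · have hfα : T.desc cfg.f α := (desc_comp hlf hlα).resolve_right hαf
          have hαf' : α ≠ cfg.f := fun h => hαf (h ▸ T.desc_refl' cfg.f)
          have hbα : T.desc cfg.b α :=
            desc_of_child_desc cfg.child_f hfα (fun h => hαf' h.symm)
          exact hvα (desc_trans' hvb hbα)
  refine ⟨⟨insert s(v, l) (P.pairs.erase s(u, v)), ?_, ?_, ?_⟩, ?_⟩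
  · intro p hp lf hlf'
    rcases Finset.mem_insert.mp hp with rfl | hp'
    · rcases Sym2.mem_iff.mp hlf' with h | h
      · exact h.symm ▸ cfg.leaf_iff.mpr (P.leaf_mem _ hp0 v (Sym2.mem_mk_right _ _))
      · exact h.symm ▸ cfg.leaf_iff.mpr hll
    · exact cfg.leaf_iff.mpr (P.leaf_mem p (Finset.mem_of_mem_erase hp') lf hlf')
  · intro p hp
    rcases Finset.mem_insert.mp hp with rfl | hp'
    · intro h
      exact cfg.disjEF hve ((Sym2.mk_isDiag_iff.mp h) ▸ hlf)
    · exact P.not_diag p (Finset.mem_of_mem_erase hp')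
  · intro p hp q hq hne
    rw [Finset.coe_insert, Set.mem_insert_iff, Finset.mem_coe, Finset.mem_erase] at hp hq
    rcases hp with rfl | ⟨hpne, hp⟩
    · rcases hq with rfl | ⟨hqne, hq⟩
      · exact absurd rfl hne
      · exact Set.disjoint_left.mpr (fun α h1 h2 => key_new_old q hq hqne α h1 h2)
    · rcases hq with rfl | ⟨hqne, hq⟩
      · exact (Set.disjoint_left.mpr (fun α h1 h2 => key_new_old p hp hpne α h1 h2)).symm
      · rw [Set.disjoint_left]
        intro α hα1 hα2
        by_cases hαc : α = cfg.c
        · exact key_old_c p hp hpne (hαc ▸ hα1)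
        · exact Set.disjoint_left.mp (P.edge_disjoint hp hq hne)
            ((cfg.edge_iff' hαc).mp hα1) ((cfg.edge_iff' hαc).mp hα2)
  · ext v0
    simp only [PathSystem.topSet, Set.mem_setOf_eq]
    constructor
    · rintro ⟨r, hr, htv⟩
      rcases Finset.mem_insert.mp hr with rfl | hr'
      · exact ⟨s(u, v), hp0, (isTopOf_unique htv htnew') ▸ htp0⟩
      · obtain ⟨hrne, hr''⟩ := Finset.mem_erase.mp hr'
        obtain ⟨t, ht, htb, htc⟩ := hold r hr'' hrne
        have := cfg.isTopOf_fwd P hr'' ht htb htc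
        exact ⟨r, hr'', (isTopOf_unique htv this) ▸ ht⟩
    · rintro ⟨r, hr, htv⟩
      by_cases hrp : r = s(u, v)
      · subst hrp
        exact ⟨s(v, l), Finset.mem_insert_self _ _, (isTopOf_unique htv htp0) ▸ htnew'⟩
      · have hv0b : v0 ≠ cfg.b := by rintro rfl; exact hbS ⟨r, hr, htv⟩
        have hv0c : v0 ≠ cfg.c := by
          rintro rfl
          exact hrp (P.top_unique_pair hr hp0 htv htp0)
        exact ⟨r, Finset.mem_insert_of_mem (Finset.mem_erase.mpr ⟨hrp, hr⟩),
          cfg.isTopOf_fwd P hr htv hv0b hv0c⟩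

end CaseIII

end NNIConfig


namespace NNIConfig

open RBT PathSystem

variable {V : Type} [Fintype V] [DecidableEq V] {T T' : RBT V} (cfg : NNIConfig T T')

/-- Subcase of (iii): some path of the system uses the edge of `T` above `f`.
Recombine that path with the `c`-top path. -/
lemma maintain_iii1 (P : PathSystem T) {u v z z' : V} (hp0 : s(u, v) ∈ P.pairs)
    (htp0 : T.isTopOf cfg.c s(u, v)) (hud : T.desc u cfg.d) (hve : T.desc v cfg.e)
    (hbS : cfg.b ∉ P.topSet)
    (hr0 : s(z, z') ∈ P.pairs) (hzf : T.desc z cfg.f) (hnz'f : ¬ T.desc z' cfg.f) :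
    ∃ Q : PathSystem T', Q.topSet = P.topSet := by
  have hlu : T.isLeaf u := P.leaf_mem _ hp0 u (Sym2.mem_mk_left _ _)
  have hlv : T.isLeaf v := P.leaf_mem _ hp0 v (Sym2.mem_mk_right _ _)
  have hlz : T.isLeaf z := P.leaf_mem _ hr0 z (Sym2.mem_mk_left _ _)
  have hlz' : T.isLeaf z' := P.leaf_mem _ hr0 z' (Sym2.mem_mk_right _ _)
  have hzb : T.desc z cfg.b := desc_trans' hzf cfg.child_f.desc
  have hub : T.desc u cfg.b := desc_trans' (desc_trans' hud cfg.child_d.desc) cfg.child_c.desc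
  have hvb : T.desc v cfg.b := desc_trans' (desc_trans' hve cfg.child_e.desc) cfg.child_c.desc
  have hlcauv : T.isLCA u v cfg.c := isTopOf_mk.mp htp0
  have hz'b : ¬ T.desc z' cfg.b := by
    intro h
    rcases cfg.desc_b_cases h with h1 | h1 | h1
    · exact cfg.leaf_ne_b hlz' h1
    · exact hbS ⟨s(z, z'), hr0, isTopOf_mk.mpr (isLCA_comm
        (lca_of_split cfg.child_c cfg.child_f (Ne.symm cfg.fc_ne) cfg.hTb h1 hzf))⟩
    · exact hnz'f h1
  have hr0ne : s(z, z') ≠ s(u, v) := by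
    intro h
    rcases Sym2.eq_iff.mp h with ⟨h1, h2⟩ | ⟨h1, h2⟩
    · exact cfg.disjDF (h1 ▸ hud) hzf
    · exact cfg.disjEF (h1 ▸ hve) hzf
  have hold : ∀ r ∈ P.pairs, r ≠ s(u, v) →
      ∃ t, T.isTopOf t r ∧ t ≠ cfg.b ∧ t ≠ cfg.c := by
    intro r hr hne
    obtain ⟨t, ht⟩ := PathSystem.top_exists (T := T) r
    refine ⟨t, ht, ?_, ?_⟩
    · rintro rfl; exact hbS ⟨r, hr, ht⟩
    · rintro rfl; exact hne (P.top_unique_pair hr hp0 ht htp0)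
  obtain ⟨w, hw0, hwb, hwc⟩ := hold _ hr0 hr0ne
  have hlca0 : T.isLCA z z' w := isTopOf_mk.mp hw0
  have hbw : T.desc cfg.b w := by
    rcases desc_comp hzb hlca0.1 with h | h
    · exact h
    · exfalso
      rcases cfg.desc_b_cases h with h1 | h1 | h1
      · exact hwb h1
      · exact hz'b (desc_trans' (desc_trans' hlca0.2.1 h1) cfg.child_c.desc)
      · exact hnz'f (desc_trans' hlca0.2.1 h1)
  have hf0 : cfg.f ∈ T.pathEdges s(z, z') :=
    mem_pathEdges.mpr ⟨child_ne_root cfg.child_f, by tauto⟩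
  have hnoc := cfg.no_c_edge_iii P hp0 htp0 hud hve hbS
  have key_old_c : ∀ r ∈ P.pairs, r ≠ s(u, v) → r ≠ s(z, z') → cfg.c ∉ T'.pathEdges r := by
    intro r hr hne hne0 hmem
    obtain ⟨t, ht, htb, htc⟩ := hold r hr hne
    have s := cfg.edge'_c_structure P hr ht htb htc hmem
    rcases s.2 with h | h
    · exact hnoc r hr h
    · exact Set.disjoint_left.mp (P.edge_disjoint hr hr0 hne0) h hf0
  have htnew1' : T'.isTopOf cfg.c s(v, z) := isTopOf_mk.mpr (cfg.lca'_efc hve hzf)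
  have hlca2 : T.isLCA u z' w := by
    refine ⟨desc_trans' hub hbw, hlca0.2.1, ?_⟩
    intro α h1 h2
    by_cases hbα : T.desc cfg.b α
    · exact hlca0.2.2 α (desc_trans' hzb hbα) h2
    · have hαb : T.desc α cfg.b := (desc_comp h1 hub).resolve_right hbα
      exact absurd (desc_trans' h2 hαb) hz'b
  have htnew2' : T'.isTopOf w s(u, z') :=
    isTopOf_mk.mpr (cfg.lca_fwd hlu hlz' hwb hwc hlca2)
  have hc2 : cfg.c ∉ T'.pathEdges s(u, z') := by
    rw [cfg.mem_edge'_c hlu hlz']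
    intro h
    have h1 : ¬(T.desc u cfg.e ∨ T.desc u cfg.f) := by
      rintro (h' | h')
      · exact cfg.disjDE hud h'
      · exact cfg.disjDF hud h'
    have h2 : ¬(T.desc z' cfg.e ∨ T.desc z' cfg.f) := by
      rintro (h' | h')
      · exact hz'b (desc_trans' (desc_trans' h' cfg.child_e.desc) cfg.child_c.desc)
      · exact hnz'f h'
    exact h (iff_of_false h1 h2)
  have key_new1_old : ∀ r ∈ P.pairs, r ≠ s(u, v) → r ≠ s(z, z') →
      ∀ α, α ∈ T'.pathEdges s(v, z) → α ∈ T'.pathEdges r → False := by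
    intro r hr hrne hrne0 α hα1 hα2
    by_cases hαc : α = cfg.c
    · exact key_old_c r hr hrne hrne0 (hαc ▸ hα2)
    · have hα2T := (cfg.edge_iff' hαc).mp hα2
      obtain ⟨hαroot, hxor⟩ := mem_pathEdges.mp hα1
      rw [cfg.root_eq] at hαroot
      rw [cfg.desc_iff hαc, cfg.desc_iff hαc] at hxor
      by_cases hvα : T.desc v α
      · have hnzα : ¬ T.desc z α := fun h => hxor (iff_of_true hvα h)
        by_cases huα : T.desc u α
        · have hcα : T.desc cfg.c α := hlcauv.2.2 α huα hvα
          have hbα : T.desc cfg.b α :=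
            desc_of_child_desc cfg.child_c hcα (fun h => hαc h.symm)
          exact hnzα (desc_trans' hzb hbα)
        · have hmem0 : α ∈ T.pathEdges s(u, v) :=
            mem_pathEdges.mpr ⟨hαroot, by tauto⟩
          exact Set.disjoint_left.mp (P.edge_disjoint hr hp0 hrne) hα2T hmem0
      · have hzα : T.desc z α := by
          by_contra h
          exact hxor (iff_of_false hvα h)
        by_cases hz'α : T.desc z' α
        · have hwα : T.desc w α := hlca0.2.2 α hzα hz'α
          exact hvα (desc_trans' hvb (desc_trans' hbw hwα))
        · have hmem0 : α ∈ T.pathEdges s(z, z') :=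
            mem_pathEdges.mpr ⟨hαroot, by tauto⟩
          exact Set.disjoint_left.mp (P.edge_disjoint hr hr0 hrne0) hα2T hmem0
  have key_new2_old : ∀ r ∈ P.pairs, r ≠ s(u, v) → r ≠ s(z, z') →
      ∀ α, α ∈ T'.pathEdges s(u, z') → α ∈ T'.pathEdges r → False := by
    intro r hr hrne hrne0 α hα1 hα2
    by_cases hαc : α = cfg.c
    · exact hc2 (hαc ▸ hα1)
    · have hα2T := (cfg.edge_iff' hαc).mp hα2
      obtain ⟨hαroot, hxor⟩ := mem_pathEdges.mp hα1
      rw [cfg.root_eq] at hαroot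
      rw [cfg.desc_iff hαc, cfg.desc_iff hαc] at hxor
      by_cases huα : T.desc u α
      · have hnz'α : ¬ T.desc z' α := fun h => hxor (iff_of_true huα h)
        by_cases hvα : T.desc v α
        · have hcα : T.desc cfg.c α := hlcauv.2.2 α huα hvα
          have hbα : T.desc cfg.b α :=
            desc_of_child_desc cfg.child_c hcα (fun h => hαc h.symm)
          have hzα : T.desc z α := desc_trans' hzb hbα
          have hmem0 : α ∈ T.pathEdges s(z, z') :=
            mem_pathEdges.mpr ⟨hαroot, by tauto⟩
          exact Set.disjoint_left.mp (P.edge_disjoint hr hr0 hrne0) hα2T hmem0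
        · have hmem0 : α ∈ T.pathEdges s(u, v) :=
            mem_pathEdges.mpr ⟨hαroot, by tauto⟩
          exact Set.disjoint_left.mp (P.edge_disjoint hr hp0 hrne) hα2T hmem0
      · have hz'α : T.desc z' α := by
          by_contra h
          exact hxor (iff_of_false huα h)
        by_cases hzα : T.desc z α
        · have hwα : T.desc w α := hlca0.2.2 α hzα hz'α
          exact huα (desc_trans' hub (desc_trans' hbw hwα))
        · have hmem0 : α ∈ T.pathEdges s(z, z') :=
            mem_pathEdges.mpr ⟨hαroot, by tauto⟩
          exact Set.disjoint_left.mp (P.edge_disjoint hr hr0 hrne0) hα2T hmem0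
  have key_new12 : ∀ α, α ∈ T'.pathEdges s(v, z) → α ∈ T'.pathEdges s(u, z') → False := by
    intro α hα1 hα2
    by_cases hαc : α = cfg.c
    · exact hc2 (hαc ▸ hα2)
    · obtain ⟨hαroot, hxor1⟩ := mem_pathEdges.mp hα1
      obtain ⟨-, hxor2⟩ := mem_pathEdges.mp hα2
      rw [cfg.root_eq] at hαroot
      rw [cfg.desc_iff hαc, cfg.desc_iff hαc] at hxor1
      rw [cfg.desc_iff hαc, cfg.desc_iff hαc] at hxor2
      by_cases hvα : T.desc v α
      · have hnzα : ¬ T.desc z α := fun h => hxor1 (iff_of_true hvα h)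
        by_cases huα : T.desc u α
        · have hcα : T.desc cfg.c α := hlcauv.2.2 α huα hvα
          have hbα : T.desc cfg.b α :=
            desc_of_child_desc cfg.child_c hcα (fun h => hαc h.symm)
          exact hnzα (desc_trans' hzb hbα)
        · have hz'α : T.desc z' α := by
            by_contra h
            exact hxor2 (iff_of_false huα h)
          by_cases hbα : T.desc cfg.b α
          · exact hnzα (desc_trans' hzb hbα)
          · have hαb : T.desc α cfg.b := (desc_comp hvα hvb).resolve_right hbα
            exact hz'b (desc_trans' hz'α hαb)
      · have hzα : T.desc z α := by
          by_contra h
          exact hxor1 (iff_of_false hvα h)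
        by_cases huα : T.desc u α
        · by_cases hbα : T.desc cfg.b α
          · exact hvα (desc_trans' hvb hbα)
          · have hαb : T.desc α cfg.b := (desc_comp hzα hzb).resolve_right hbα
            rcases cfg.desc_b_cases hαb with h | h | h
            · exact hbα (h ▸ T.desc_refl' cfg.b)
            · exact cfg.disjCF (desc_trans' hzα h) hzf
            · exact cfg.disjDF hud (desc_trans' huα h)
        · have hz'α : T.desc z' α := by
            by_contra h
            exact hxor2 (iff_of_false huα h)
          have hwα : T.desc w α := hlca0.2.2 α hzα hz'α
          exact huα (desc_trans' hub (desc_trans' hbw hwα))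
  refine ⟨⟨insert s(v, z) (insert s(u, z') ((P.pairs.erase s(u, v)).erase s(z, z'))),
    ?_, ?_, ?_⟩, ?_⟩
  · intro p hp lf hlf'
    rcases Finset.mem_insert.mp hp with rfl | hp'
    · rcases Sym2.mem_iff.mp hlf' with h | h
      · exact h.symm ▸ cfg.leaf_iff.mpr hlv
      · exact h.symm ▸ cfg.leaf_iff.mpr hlz
    · rcases Finset.mem_insert.mp hp' with rfl | hp''
      · rcases Sym2.mem_iff.mp hlf' with h | h
        · exact h.symm ▸ cfg.leaf_iff.mpr hlu
        · exact h.symm ▸ cfg.leaf_iff.mpr hlz'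
      · exact cfg.leaf_iff.mpr (P.leaf_mem p
          (Finset.mem_of_mem_erase (Finset.mem_of_mem_erase hp'')) lf hlf')
  · intro p hp
    rcases Finset.mem_insert.mp hp with rfl | hp'
    · intro h
      exact cfg.disjEF hve ((Sym2.mk_isDiag_iff.mp h) ▸ hzf)
    · rcases Finset.mem_insert.mp hp' with rfl | hp''
      · intro h
        exact hz'b ((Sym2.mk_isDiag_iff.mp h) ▸ hub)
      · exact P.not_diag p (Finset.mem_of_mem_erase (Finset.mem_of_mem_erase hp''))
  · intro p hp q hq hne
    rw [Finset.coe_insert, Set.mem_insert_iff, Finset.coe_insert, Set.mem_insert_iff,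
      Finset.mem_coe, Finset.mem_erase, Finset.mem_erase] at hp hq
    rcases hp with rfl | rfl | ⟨hpne0, hpne, hp⟩
    · rcases hq with rfl | rfl | ⟨hqne0, hqne, hq⟩
      · exact absurd rfl hne
      · exact Set.disjoint_left.mpr (fun α h1 h2 => key_new12 α h1 h2)
      · exact Set.disjoint_left.mpr (fun α h1 h2 => key_new1_old q hq hqne hqne0 α h1 h2)
    · rcases hq with rfl | rfl | ⟨hqne0, hqne, hq⟩
      · exact (Set.disjoint_left.mpr (fun α h1 h2 => key_new12 α h1 h2)).symm
      · exact absurd rfl hne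
      · exact Set.disjoint_left.mpr (fun α h1 h2 => key_new2_old q hq hqne hqne0 α h1 h2)
    · rcases hq with rfl | rfl | ⟨hqne0, hqne, hq⟩
      · exact (Set.disjoint_left.mpr (fun α h1 h2 => key_new1_old p hp hpne hpne0 α h1 h2)).symm
      · exact (Set.disjoint_left.mpr (fun α h1 h2 => key_new2_old p hp hpne hpne0 α h1 h2)).symm
      · rw [Set.disjoint_left]
        intro α hα1 hα2
        by_cases hαc : α = cfg.c
        · exact key_old_c p hp hpne hpne0 (hαc ▸ hα1)
        · exact Set.disjoint_left.mp (P.edge_disjoint hp hq hne)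
            ((cfg.edge_iff' hαc).mp hα1) ((cfg.edge_iff' hαc).mp hα2)
  · ext v0
    simp only [PathSystem.topSet, Set.mem_setOf_eq]
    constructor
    · rintro ⟨r, hr, htv⟩
      rcases Finset.mem_insert.mp hr with rfl | hr'
      · exact ⟨s(u, v), hp0, (isTopOf_unique htv htnew1') ▸ htp0⟩
      · rcases Finset.mem_insert.mp hr' with rfl | hr''
        · exact ⟨s(z, z'), hr0, (isTopOf_unique htv htnew2') ▸ hw0⟩
        · obtain ⟨hrne0, hr3⟩ := Finset.mem_erase.mp hr''
          obtain ⟨hrne, hr4⟩ := Finset.mem_erase.mp hr3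
          obtain ⟨t, ht, htb, htc⟩ := hold r hr4 hrne
          have := cfg.isTopOf_fwd P hr4 ht htb htc
          exact ⟨r, hr4, (isTopOf_unique htv this) ▸ ht⟩
    · rintro ⟨r, hr, htv⟩
      by_cases hrp : r = s(u, v)
      · subst hrp
        exact ⟨s(v, z), Finset.mem_insert_self _ _, (isTopOf_unique htv htp0) ▸ htnew1'⟩
      · by_cases hrr0 : r = s(z, z')
        · subst hrr0
          exact ⟨s(u, z'), Finset.mem_insert_of_mem (Finset.mem_insert_self _ _),
            (isTopOf_unique htv hw0) ▸ htnew2'⟩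
        · have hv0b : v0 ≠ cfg.b := by rintro rfl; exact hbS ⟨r, hr, htv⟩
          have hv0c : v0 ≠ cfg.c := by
            rintro rfl
            exact hrp (P.top_unique_pair hr hp0 htv htp0)
          exact ⟨r, Finset.mem_insert_of_mem (Finset.mem_insert_of_mem
            (Finset.mem_erase.mpr ⟨hrr0, Finset.mem_erase.mpr ⟨hrp, hr⟩⟩)),
            cfg.isTopOf_fwd P hr htv hv0b hv0c⟩

end NNIConfig

/-- Let `T'` be obtained from the rooted binary tree `T` by an NNI at
the configuration `(a, b, c, d, e, f)`, and let `𝒫` be a system of disjoint paths in `T`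
with top-set `V` and top-vector `x`.  Then: (i) if `b ∉ V` and `c ∉ V` then `x` is
maintaining (i.e. `x` is also the top-vector of a system of disjoint paths in `T'`);
(ii) if `b ∈ V`, then `x` is maintaining iff `d` is not blocked in `V`;
(iii) if `c ∈ V`, then `x` is maintaining iff `f` is not blocked in `V`. -/
theorem cfnmc_nni_maintaining_iff {V : Type} [Fintype V] [DecidableEq V]
    (T T' : RBT V) (cfg : NNIConfig T T') (P : PathSystem T) :
    ((cfg.b ∉ P.topSet ∧ cfg.c ∉ P.topSet) → IsTopVecOf T' P.topVec) ∧
    (cfg.b ∈ P.topSet → (IsTopVecOf T' P.topVec ↔ ¬ T.blocked cfg.d P.topSet)) ∧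
    (cfg.c ∈ P.topSet → (IsTopVecOf T' P.topVec ↔ ¬ T.blocked cfg.f P.topSet)) := by
  refine ⟨?_, ?_, ?_⟩
  · rintro ⟨hb, hc⟩
    obtain ⟨Q, hQ⟩ := cfg.maintain_i P hb hc
    exact ⟨Q, topVec_eq_of_topSet_eq hQ⟩
  · intro hb
    refine ⟨cfg.not_blocked_d_of_maintained P hb, ?_⟩
    intro hnb
    have hcS : cfg.c ∉ P.topSet := fun h => cfg.not_b_and_c P hb h
    obtain ⟨p0, hp0, htp0⟩ := hb
    obtain ⟨x, y, rfl, hlx, hly, hxc, hyf⟩ := P.top_pair_split hp0 cfg.child_c cfg.child_f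
      (Ne.symm cfg.fc_ne) cfg.hTb htp0
    rcases cfg.desc_c_cases hxc with h | hxd | hxe
    · exact absurd h (cfg.leaf_ne_c hlx)
    · obtain ⟨Q, hQ⟩ := cfg.maintain_iiA1 P hp0 htp0 hxd hyf hcS
      exact ⟨Q, topVec_eq_of_topSet_eq hQ⟩
    · simp only [RBT.blocked] at hnb
      push_neg at hnb
      obtain ⟨l, hll, hld, hfree⟩ := hnb
      obtain ⟨Q, hQ⟩ := cfg.maintain_iiA2 P hp0 htp0 hxe hyf hcS hll hld
        (fun w hw hpair => hfree w hw hpair.1 hpair.2)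
      exact ⟨Q, topVec_eq_of_topSet_eq hQ⟩
  · intro hc
    refine ⟨cfg.not_blocked_f_of_maintained P hc, ?_⟩
    intro hnb
    have hbS : cfg.b ∉ P.topSet := fun h => cfg.not_b_and_c P h hc
    obtain ⟨p0, hp0, htp0⟩ := hc
    obtain ⟨u, v, rfl, hlu, hlv, hud, hve⟩ := P.top_pair_split hp0 cfg.child_d cfg.child_e
      cfg.de_ne cfg.hTc htp0
    by_cases hex : ∃ r ∈ P.pairs, cfg.f ∈ T.pathEdges r
    · obtain ⟨r, hr, hfr⟩ := hex
      obtain ⟨z, z', hzz', hz, hz'⟩ := RBT.mem_pathEdges_elim hfr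
      subst hzz'
      obtain ⟨Q, hQ⟩ := cfg.maintain_iii1 P hp0 htp0 hud hve hbS hr hz hz'
      exact ⟨Q, topVec_eq_of_topSet_eq hQ⟩
    · push_neg at hex
      simp only [RBT.blocked] at hnb
      push_neg at hnb
      obtain ⟨l, hll, hlf, hfree⟩ := hnb
      obtain ⟨Q, hQ⟩ := cfg.maintain_iii2 P hp0 htp0 hud hve hbS hll hlf
        (fun w hw hpair => hfree w hw hpair.1 hpair.2) hex
      exact ⟨Q, topVec_eq_of_topSet_eq hQ⟩
end

section
/- Let T be a rooted binary tree and let L be a set of leaves of T with |L| even. Then there exists exactly one system of disjoint paths 𝒫 in T such that every leaf in L is an endpoint of exactly one path of 𝒫 and every endpoint of every path of 𝒫 lies in L. Equivalently, there is a unique perfect matching of L such that the unique paths in T joining the matched pairs are pairwise edge-disjoint. -/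
open Pointwise

namespace RBT

variable {V : Type} [Fintype V] [DecidableEq V] {T : RBT V}

lemma desc_refl'_s15 (v : V) : T.desc v v := ⟨0, rfl⟩

lemma desc_trans'_s15 {a b c : V} (h1 : T.desc a b) (h2 : T.desc b c) : T.desc a c := by
  obtain ⟨k, hk⟩ := h1; obtain ⟨l, hl⟩ := h2
  exact ⟨l + k, by rw [Function.iterate_add_apply, hk, hl]⟩

lemma desc_of_desc_child' {c u v : V} (h : T.desc c u) (hp : T.parent u = v) : T.desc c v := by
  obtain ⟨k, hk⟩ := h
  exact ⟨k + 1, by rw [Function.iterate_succ_apply', hk, hp]⟩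

lemma iterate_parent_root' (j : ℕ) : T.parent^[j] T.root = T.root := by
  induction j with
  | zero => rfl
  | succ n ih => rw [Function.iterate_succ_apply', ih, T.parent_root]

lemma eq_of_leaf_desc' {a u : V} (hl : T.isLeaf a) (h : T.desc u a) : u = a := by
  obtain ⟨k, hk⟩ := h
  induction k generalizing u with
  | zero => exact hk
  | succ n ih =>
    rw [Function.iterate_succ_apply] at hk
    exact hl u (ih hk)

noncomputable def depth' (T : RBT V) (v : V) : ℕ := Nat.find (T.reaches v)

lemma depth_spec' (v : V) : T.parent^[T.depth' v] v = T.root := Nat.find_spec (T.reaches v)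

lemma depth_le' {v : V} {k : ℕ} (h : T.parent^[k] v = T.root) : T.depth' v ≤ k := Nat.find_le h

lemma depth_root' : T.depth' T.root = 0 := Nat.le_zero.mp (depth_le' rfl)

lemma depth_lt' {u v : V} (h : T.desc u v) (hne : u ≠ v) : T.depth' v < T.depth' u := by
  obtain ⟨m, hm⟩ := h
  have hm0 : m ≠ 0 := by rintro rfl; exact hne hm
  by_cases hvr : v = T.root
  · subst hvr
    rw [depth_root']
    rcases Nat.eq_zero_or_pos (T.depth' u) with h0 | h0
    · exact absurd (by simpa [h0] using depth_spec' (T := T) u) hne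
    · exact h0
  · set k := T.depth' u with hk
    have hk' : T.parent^[k] u = T.root := depth_spec' u
    rcases lt_or_ge k m with hlt | hge
    · exfalso
      apply hvr
      have : T.parent^[m] u = T.parent^[m - k] (T.parent^[k] u) := by
        rw [← Function.iterate_add_apply, Nat.sub_add_cancel hlt.le]
      rw [hm, hk', iterate_parent_root'] at this
      exact this
    · have : T.parent^[k - m] v = T.root := by
        rw [← hm, ← Function.iterate_add_apply, Nat.sub_add_cancel hge, hk']
      have h1 : T.depth' v ≤ k - m := depth_le' this
      omega

lemma ancestors_chain' {a w1 w2 : V} (h1 : T.desc a w1) (h2 : T.desc a w2) :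
    T.desc w1 w2 ∨ T.desc w2 w1 := by
  obtain ⟨k1, hk1⟩ := h1; obtain ⟨k2, hk2⟩ := h2
  rcases le_total k1 k2 with h | h
  · left; exact ⟨k2 - k1, by rw [← hk1, ← Function.iterate_add_apply, Nat.sub_add_cancel h, hk2]⟩
  · right; exact ⟨k1 - k2, by rw [← hk2, ← Function.iterate_add_apply, Nat.sub_add_cancel h, hk1]⟩

lemma child_mem_pair' {u1 u2 u v : V} (h1 : T.isChild u1 v) (h2 : T.isChild u2 v)
    (h12 : u1 ≠ u2) (hu : T.isChild u v) : u = u1 ∨ u = u2 := by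
  have hcard : Nat.card {x : V // T.parent x = v ∧ x ≠ v} = 2 := by
    rcases T.binary v with h | h
    · exfalso
      have : Nonempty {x : V // T.parent x = v ∧ x ≠ v} := ⟨⟨u1, h1⟩⟩
      have := Nat.card_pos (α := {x : V // T.parent x = v ∧ x ≠ v})
      omega
    · exact h
  rw [Nat.card_eq_two_iff] at hcard
  obtain ⟨x, y, hxy, hset⟩ := hcard
  have hmem : ∀ z : {x : V // T.parent x = v ∧ x ≠ v}, z = x ∨ z = y := by
    intro z
    have : z ∈ ({x, y} : Set {x : V // T.parent x = v ∧ x ≠ v}) := hset ▸ Set.mem_univ z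
    simpa using this
  rcases hmem ⟨u1, h1⟩ with ha | ha <;> rcases hmem ⟨u2, h2⟩ with hb | hb <;>
    rcases hmem ⟨u, hu⟩ with hc | hc <;>
    simp_all [Subtype.ext_iff]

lemma exists_child_of_desc' {c v : V} (h : T.desc c v) (hne : c ≠ v) :
    ∃ u, T.isChild u v ∧ T.desc c u := by
  have hex : ∃ m, T.parent^[m] c = v := h
  classical
  set m := Nat.find hex with hm
  have hspec : T.parent^[m] c = v := Nat.find_spec hex
  have hm0 : m ≠ 0 := by rintro h0; rw [h0] at hspec; exact hne hspec
  refine ⟨T.parent^[m - 1] c, ⟨?_, ?_⟩, ⟨m - 1, rfl⟩⟩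
  · have h2 : T.parent^[m - 1 + 1] c = v := by
      rw [Nat.sub_add_cancel (Nat.one_le_iff_ne_zero.mpr hm0)]; exact hspec
    rw [Function.iterate_succ_apply'] at h2
    exact h2
  · intro heq
    have h3 : T.parent^[m - 1] c = v := heq
    have := Nat.find_le (h := hex) h3
    omega

lemma not_leaf_of_child' {u v : V} (hu : T.isChild u v) : ¬ T.isLeaf v :=
  fun hl => hu.2 (hl u hu.1)

lemma depth_child' {u v : V} (hu : T.isChild u v) : T.depth' u = T.depth' v + 1 := by
  have h1 : T.depth' v < T.depth' u := depth_lt' ⟨1, by simpa using hu.1⟩ hu.2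
  have h2 : T.depth' u ≤ T.depth' v + 1 := by
    apply depth_le'
    rw [Function.iterate_add_apply, Function.iterate_one, hu.1]
    exact depth_spec' v
  omega

lemma exists_split' {a b : V} (hab : a ≠ b) (ha : T.isLeaf a) (hb : T.isLeaf b) :
    ∃ v u1 u2, T.isChild u1 v ∧ T.isChild u2 v ∧ u1 ≠ u2 ∧ T.desc a u1 ∧ T.desc b u2 ∧
      ∀ w, T.desc a w → T.desc b w → T.depth' w ≤ T.depth' v := by
  set S : Set V := {w | T.desc a w ∧ T.desc b w} with hS
  have hSne : S.Nonempty := ⟨T.root, T.reaches a, T.reaches b⟩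
  obtain ⟨v, hv, hvmax⟩ := Set.exists_max_image S T.depth' (Set.toFinite S) hSne
  have hva : v ≠ a := fun h => hab (Eq.symm (eq_of_leaf_desc' ha (h ▸ hv.2)))
  have hvb : v ≠ b := fun h => hab (eq_of_leaf_desc' hb (h ▸ hv.1))
  obtain ⟨u1, hu1, hau1⟩ := exists_child_of_desc' hv.1 (Ne.symm hva)
  obtain ⟨u2, hu2, hbu2⟩ := exists_child_of_desc' hv.2 (Ne.symm hvb)
  have h12 : u1 ≠ u2 := by
    rintro rfl
    have hmem : u1 ∈ S := ⟨hau1, hbu2⟩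
    have := hvmax u1 hmem
    have := depth_child' hu1
    omega
  exact ⟨v, u1, u2, hu1, hu2, h12, hau1, hbu2, fun w hw1 hw2 => hvmax w ⟨hw1, hw2⟩⟩

lemma mem_upEdges' {w l : V} : w ∈ T.upEdges l ↔ w ≠ T.root ∧ T.desc l w := Iff.rfl

lemma mem_pathEdges' {w e f : V} :
    w ∈ T.pathEdges s(e, f) ↔
      (w ∈ T.upEdges e ∧ w ∉ T.upEdges f) ∨ (w ∈ T.upEdges f ∧ w ∉ T.upEdges e) := by
  show w ∈ Sym2.lift _ s(e, f) ↔ _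
  rw [Sym2.lift_mk]
  exact Set.mem_symmDiff

end RBT

namespace PathSystem

lemma pairs_injective' {V : Type} [Fintype V] [DecidableEq V] {T : RBT V}
    {P Q : PathSystem T} (h : P.pairs = Q.pairs) : P = Q := by
  cases P; cases Q
  simp only at h
  subst h
  rfl

end PathSystem

theorem cfnmc_aux {V : Type} [Fintype V] [DecidableEq V] (T : RBT V) :
    ∀ n : ℕ, ∀ L : Set V, L.ncard = n → (∀ l ∈ L, T.isLeaf l) → Even n →
    ∃! P : PathSystem T,
      (∀ p ∈ P.pairs, ∀ l ∈ p, l ∈ L) ∧ ∀ l ∈ L, ∃! p, p ∈ P.pairs ∧ l ∈ p := by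
  intro n
  induction n using Nat.strong_induction_on with
  | _ n ih =>
  intro L hn hL hev
  rcases Nat.eq_zero_or_pos n with rfl | hpos
  · -- base case : L = ∅
    have hLe : L = ∅ := (Set.ncard_eq_zero (Set.toFinite L)).mp hn
    subst hLe
    refine ⟨⟨∅, by simp, by simp, by simp⟩, ⟨by simp, by simp⟩, ?_⟩
    rintro Q ⟨hQ1, -⟩
    apply PathSystem.pairs_injective'
    simp only
    rw [Finset.eq_empty_iff_forall_notMem]
    intro p
    induction p using Sym2.ind with
    | _ x y =>
      intro hp
      exact absurd (hQ1 _ hp x (Sym2.mem_mk_left x y)) (Set.notMem_empty x)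
  · -- inductive step
    have h2n : 2 ≤ n := by rcases hev with ⟨k, hk⟩; omega
    obtain ⟨a, haL, b, hbL, hab⟩ := (Set.one_lt_ncard (Set.toFinite L)).mp (by omega)
    -- the set of "good" vertices
    set Good : Set V := {v | ∃ u1 u2 c d, T.isChild u1 v ∧ T.isChild u2 v ∧ u1 ≠ u2 ∧
      c ∈ L ∧ d ∈ L ∧ T.desc c u1 ∧ T.desc d u2} with hGood
    have hGne : Good.Nonempty := by
      obtain ⟨v0, u1, u2, hu1, hu2, h12, ha1, hb2, -⟩ :=
        RBT.exists_split' hab (hL a haL) (hL b hbL)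
      exact ⟨v0, u1, u2, a, b, hu1, hu2, h12, haL, hbL, ha1, hb2⟩
    obtain ⟨v, hvG, hvmax⟩ := Set.exists_max_image Good T.depth' (Set.toFinite Good) hGne
    obtain ⟨u1, u2, c, d, hu1, hu2, h12, hcL, hdL, hcu1, hdu2⟩ := hvG
    have key1 : ∀ e ∈ L, T.desc e u1 → e = c := by
      intro e heL hedesc
      by_contra hec
      obtain ⟨v', u1', u2', hu1', hu2', h12', he', hc', hmax'⟩ :=
        RBT.exists_split' hec (hL e heL) (hL c hcL)
      have hw : T.depth' u1 ≤ T.depth' v' := hmax' u1 hedesc hcu1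
      have hv'G : v' ∈ Good := ⟨u1', u2', e, c, hu1', hu2', h12', heL, hcL, he', hc'⟩
      have := hvmax v' hv'G
      have := RBT.depth_child' hu1
      omega
    have key2 : ∀ e ∈ L, T.desc e u2 → e = d := by
      intro e heL hedesc
      by_contra hed
      obtain ⟨v', u1', u2', hu1', hu2', h12', he', hd', hmax'⟩ :=
        RBT.exists_split' hed (hL e heL) (hL d hdL)
      have hw : T.depth' u2 ≤ T.depth' v' := hmax' u2 hedesc hdu2
      have hv'G : v' ∈ Good := ⟨u1', u2', e, d, hu1', hu2', h12', heL, hdL, he', hd'⟩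
      have := hvmax v' hv'G
      have := RBT.depth_child' hu2
      omega
    have hcd : c ≠ d := by
      rintro rfl
      have hd1 := RBT.depth_child' hu1
      have hd2 := RBT.depth_child' hu2
      rcases RBT.ancestors_chain' hcu1 hdu2 with h | h
      · have := RBT.depth_lt' h h12
        omega
      · have := RBT.depth_lt' h (Ne.symm h12)
        omega
    have hcv : T.desc c v := RBT.desc_of_desc_child' hcu1 hu1.1
    have hdv : T.desc d v := RBT.desc_of_desc_child' hdu2 hu2.1
    have hdescv : ∀ e ∈ L, T.desc e v → e = c ∨ e = d := by
      intro e heL hev'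
      have henv : e ≠ v := by
        rintro rfl
        exact RBT.not_leaf_of_child' hu1 (hL e heL)
      obtain ⟨u, hu, heu⟩ := RBT.exists_child_of_desc' hev' henv
      rcases RBT.child_mem_pair' hu1 hu2 h12 hu with rfl | rfl
      · exact Or.inl (key1 e heL heu)
      · exact Or.inr (key2 e heL heu)
    -- the smaller leaf set
    set L' : Set V := L \ {c, d} with hL'
    have hsub : ({c, d} : Set V) ⊆ L := by
      intro x hx
      rcases hx with rfl | rfl
      exacts [hcL, hdL]
    have hL'card : L'.ncard = n - 2 := by
      rw [hL', Set.ncard_diff hsub (Set.toFinite _), Set.ncard_pair hcd, hn]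
    have hL'leaf : ∀ l ∈ L', T.isLeaf l := fun l hl => hL l hl.1
    have hL'ev : Even (n - 2) := by
      rcases hev with ⟨k, hk⟩
      exact ⟨k - 1, by omega⟩
    obtain ⟨P', ⟨hP'mem, hP'cov⟩, hP'uniq⟩ := ih (n - 2) (by omega) L' hL'card hL'leaf hL'ev
    -- path of (c,d) lies strictly below v
    have hpath_in : ∀ w ∈ T.pathEdges s(c, d), T.desc w v ∧ w ≠ v := by
      intro w hw
      rw [RBT.mem_pathEdges'] at hw
      have hcases : (T.desc c w ∧ ¬ T.desc d w) ∨ (T.desc d w ∧ ¬ T.desc c w) := by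
        rcases hw with ⟨⟨hwr, hcw⟩, hnf⟩ | ⟨⟨hwr, hdw⟩, hnf⟩
        · exact Or.inl ⟨hcw, fun hdw => hnf ⟨hwr, hdw⟩⟩
        · exact Or.inr ⟨hdw, fun hcw => hnf ⟨hwr, hcw⟩⟩
      rcases hcases with ⟨hcw, hndw⟩ | ⟨hdw, hncw⟩
      · rcases RBT.ancestors_chain' hcw hcv with h | h
        · refine ⟨h, ?_⟩
          rintro rfl
          exact hndw hdv
        · exact absurd (RBT.desc_trans'_s15 hdv h) hndw
      · rcases RBT.ancestors_chain' hdw hdv with h | h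
        · refine ⟨h, ?_⟩
          rintro rfl
          exact hncw hcv
        · exact absurd (RBT.desc_trans'_s15 hcv h) hncw
    -- paths of P' avoid the subtree below v
    have hpath_out : ∀ q ∈ P'.pairs, ∀ w ∈ T.pathEdges q, ¬ (T.desc w v ∧ w ≠ v) := by
      intro q hq
      obtain ⟨f, hf⟩ := Sym2.mem_iff_exists.mp (Sym2.out_fst_mem q)
      set e := q.out.1 with he
      rw [hf] at hq ⊢
      intro w hw hcon
      rw [RBT.mem_pathEdges'] at hw
      have heL' : e ∈ L' := hP'mem _ hq e (Sym2.mem_mk_left e f)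
      have hfL' : f ∈ L' := hP'mem _ hq f (Sym2.mem_mk_right e f)
      have hdesc : T.desc e w ∨ T.desc f w := by
        rcases hw with ⟨⟨-, h⟩, -⟩ | ⟨⟨-, h⟩, -⟩
        exacts [Or.inl h, Or.inr h]
      have hwv : T.desc w v := hcon.1
      rcases hdesc with h | h
      · rcases hdescv e heL'.1 (RBT.desc_trans'_s15 h hwv) with rfl | rfl
        · exact heL'.2 (Or.inl rfl)
        · exact heL'.2 (Or.inr rfl)
      · rcases hdescv f hfL'.1 (RBT.desc_trans'_s15 h hwv) with rfl | rfl
        · exact hfL'.2 (Or.inl rfl)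
        · exact hfL'.2 (Or.inr rfl)
    -- construct the system for L
    refine ⟨⟨insert s(c, d) P'.pairs, ?_, ?_, ?_⟩, ⟨?_, ?_⟩, ?_⟩
    · -- leaf_mem
      intro p hp l hl
      rcases Finset.mem_insert.mp hp with rfl | hp'
      · rcases Sym2.mem_iff.mp hl with rfl | rfl
        exacts [hL l hcL, hL l hdL]
      · exact P'.leaf_mem p hp' l hl
    · -- not_diag
      intro p hp
      rcases Finset.mem_insert.mp hp with rfl | hp'
      · rw [Sym2.mk_isDiag_iff]
        exact hcd
      · exact P'.not_diag p hp'
    · -- edge_disjoint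
      intro p hp q hq hpq
      rw [Finset.coe_insert, Set.mem_insert_iff] at hp hq
      rcases hp with rfl | hp <;> rcases hq with rfl | hq
      · exact absurd rfl hpq
      · rw [Set.disjoint_left]
        intro w hwp hwq
        exact hpath_out q hq w hwq (hpath_in w hwp)
      · rw [Set.disjoint_right]
        intro w hwp hwq
        exact hpath_out p hp w hwq (hpath_in w hwp)
      · exact P'.edge_disjoint hp hq hpq
    · -- endpoints in L
      intro p hp l hl
      rcases Finset.mem_insert.mp hp with rfl | hp'
      · rcases Sym2.mem_iff.mp hl with rfl | rfl
        exacts [hcL, hdL]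
      · exact (hP'mem p hp' l hl).1
    · -- each leaf of L in exactly one pair
      intro l hlL
      by_cases hlcd : l = c ∨ l = d
      · refine ⟨s(c, d), ⟨Finset.mem_insert_self _ _, Sym2.mem_iff.mpr hlcd⟩, ?_⟩
        rintro p ⟨hp, hlp⟩
        rcases Finset.mem_insert.mp hp with rfl | hp'
        · rfl
        · exact absurd hlcd (hP'mem p hp' l hlp).2
      · have hlL' : l ∈ L' := ⟨hlL, hlcd⟩
        obtain ⟨q, ⟨hq, hlq⟩, hquniq⟩ := hP'cov l hlL'
        refine ⟨q, ⟨Finset.mem_insert_of_mem hq, hlq⟩, ?_⟩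
        rintro p ⟨hp, hlp⟩
        rcases Finset.mem_insert.mp hp with rfl | hp'
        · exact absurd (Sym2.mem_iff.mp hlp) hlcd
        · exact hquniq p ⟨hp', hlp⟩
    · -- uniqueness
      rintro Q ⟨hQ1, hQ2⟩
      obtain ⟨q, ⟨hqQ, hcq⟩, hcuniq⟩ := hQ2 c hcL
      obtain ⟨e, rfl⟩ := Sym2.mem_iff_exists.mp hcq
      have hce : c ≠ e := by
        have := Q.not_diag _ hqQ
        rwa [Sym2.mk_isDiag_iff] at this
      have heL : e ∈ L := hQ1 _ hqQ e (Sym2.mem_mk_right c e)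
      have hed : e = d := by
        by_contra hed
        obtain ⟨q', ⟨hq'Q, hdq'⟩, hduniq⟩ := hQ2 d hdL
        obtain ⟨f, rfl⟩ := Sym2.mem_iff_exists.mp hdq'
        have hdf : d ≠ f := by
          have := Q.not_diag _ hq'Q
          rwa [Sym2.mk_isDiag_iff] at this
        have hfL : f ∈ L := hQ1 _ hq'Q f (Sym2.mem_mk_right d f)
        have hfc : f ≠ c := by
          intro hfc2
          have hmem : c ∈ s(d, f) := by rw [← hfc2]; exact Sym2.mem_mk_right d f
          have heq : s(d, f) = s(c, e) := hcuniq s(d, f) ⟨hq'Q, hmem⟩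
          rw [Sym2.eq_iff] at heq
          rcases heq with ⟨h1, -⟩ | ⟨h1, -⟩
          · exact hcd h1.symm
          · exact hed h1.symm
        have hnev : ¬ T.desc e v := by
          intro h
          rcases hdescv e heL h with rfl | rfl
          · exact hce rfl
          · exact hed rfl
        have hnfv : ¬ T.desc f v := by
          intro h
          rcases hdescv f hfL h with rfl | rfl
          · exact hfc rfl
          · exact hdf rfl
        have hvroot : v ≠ T.root := by
          rintro rfl
          exact hnev (T.reaches e)
        have hvq : v ∈ T.pathEdges s(c, e) :=
          RBT.mem_pathEdges'.mpr (Or.inl ⟨⟨hvroot, hcv⟩, fun h => hnev h.2⟩)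
        have hvq' : v ∈ T.pathEdges s(d, f) :=
          RBT.mem_pathEdges'.mpr (Or.inl ⟨⟨hvroot, hdv⟩, fun h => hnfv h.2⟩)
        have hqq' : s(c, e) ≠ s(d, f) := by
          rw [Ne, Sym2.eq_iff]
          rintro (⟨h1, -⟩ | ⟨-, h2⟩)
          · exact hcd h1
          · exact hed h2
        have hdisj := Q.edge_disjoint (Finset.mem_coe.mpr hqQ) (Finset.mem_coe.mpr hq'Q) hqq'
        exact Set.disjoint_left.mp hdisj hvq hvq'
      subst hed
      -- now s(c, e) = s(c, d) ∈ Q.pairs; remove it and apply the induction hypothesis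
      have hQer1 : ∀ p ∈ Q.pairs.erase s(c, e), ∀ l ∈ p, l ∈ L' := by
        intro p hp l hl
        have hp' := Finset.mem_erase.mp hp
        refine ⟨hQ1 p hp'.2 l hl, ?_⟩
        rintro (hl1 | hl1)
        · exact hp'.1 (hcuniq p ⟨hp'.2, hl1 ▸ hl⟩)
        · obtain ⟨qd, ⟨hqdQ, hdqd⟩, hduniq⟩ := hQ2 e hdL
          have h1 : s(c, e) = qd := hduniq s(c, e) ⟨hqQ, Sym2.mem_mk_right c e⟩
          have h2 : p = qd := hduniq p ⟨hp'.2, hl1 ▸ hl⟩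
          exact hp'.1 (h2.trans h1.symm)
      have hQer2 : ∀ l ∈ L', ∃! p, p ∈ Q.pairs.erase s(c, e) ∧ l ∈ p := by
        intro l hlL'
        obtain ⟨p, ⟨hpQ, hlp⟩, hpuniq⟩ := hQ2 l hlL'.1
        have hpne : p ≠ s(c, e) := by
          rintro rfl
          exact hlL'.2 (Sym2.mem_iff.mp hlp)
        refine ⟨p, ⟨Finset.mem_erase.mpr ⟨hpne, hpQ⟩, hlp⟩, ?_⟩
        rintro p' ⟨hp', hlp'⟩
        exact hpuniq p' ⟨(Finset.mem_erase.mp hp').2, hlp'⟩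
      set Qer : PathSystem T :=
        ⟨Q.pairs.erase s(c, e),
         fun p hp => Q.leaf_mem p (Finset.mem_of_mem_erase hp),
         fun p hp => Q.not_diag p (Finset.mem_of_mem_erase hp),
         Q.edge_disjoint.mono (by
           intro x hx
           exact Finset.mem_coe.mpr (Finset.mem_of_mem_erase (Finset.mem_coe.mp hx)))⟩
        with hQer
      have hQP' : Qer = P' := hP'uniq Qer ⟨hQer1, hQer2⟩
      apply PathSystem.pairs_injective'
      show Q.pairs = insert s(c, e) P'.pairs
      have hpairs : Qer.pairs = P'.pairs := by rw [hQP']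
      rw [← hpairs]
      exact (Finset.insert_erase hqQ).symm

/-- Let `T` be a rooted binary tree and let `L` be a set of leaves of
`T` with `|L|` even.  There exists exactly one system of disjoint paths `𝒫` in `T` such
that every leaf in `L` is an endpoint of exactly one path of `𝒫` and every endpoint of
every path of `𝒫` lies in `L`.  Equivalently, there is a unique perfect matching of `L`
whose matched pairs are joined by pairwise edge-disjoint paths in `T`. -/
theorem cfnmc_unique_disjoint_path_system {V : Type} [Fintype V] [DecidableEq V]
    (T : RBT V) (L : Set V) (hL : ∀ l ∈ L, T.isLeaf l) (heven : Even L.ncard) :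
    ∃! P : PathSystem T,
      (∀ p ∈ P.pairs, ∀ l ∈ p, l ∈ L) ∧ ∀ l ∈ L, ∃! p, p ∈ P.pairs ∧ l ∈ p := by
  exact cfnmc_aux T L.ncard L rfl hL heven
end
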